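/- Let G be a maximal ancestral graph (MAG) over a finite vertex set W and let X ∈ W. Then the latent projection G_{W∖{X}} is equal to the induced subgraph G[W∖{X}] if and only if X is removable in G. -/

import Mathlib

/-!
Common framework: mixed graphs, paths, colliders, m-separation, MAGs,
removability, Markov boundaries, latent projection, orders.
-/

/-- A mixed graph over a vertex set `verts`, with directed edges `dir` and
bidirected edges `bi`. -/
structure MixedGraph (V : Type*) where
  verts : Set V
  dir : V → V → Prop
  bi : V → V → Prop
  bi_symm : ∀ {a b : V}, bi a b → bi b a
  dir_mem : ∀ {a b : V}, dir a b → a ∈ verts ∧ b ∈ verts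
  bi_mem : ∀ {a b : V}, bi a b → a ∈ verts ∧ b ∈ verts

namespace MixedGraph

variable {V : Type*}

/-- Two vertices are neighbors (adjacent) if joined by a directed or bidirected edge. -/
def adj (G : MixedGraph V) (a b : V) : Prop := G.dir a b ∨ G.dir b a ∨ G.bi a b

/-- `a` is an ancestor of `b` (every vertex is an ancestor of itself). -/
def anc (G : MixedGraph V) (a b : V) : Prop := Relation.ReflTransGen G.dir a b

/-- The set of neighbors of `a`. -/
def neighbors (G : MixedGraph V) (a : V) : Set V := {b | b ≠ a ∧ G.adj a b}

/-- The set of parents of `a`. -/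
def parents (G : MixedGraph V) (a : V) : Set V := {b | G.dir b a}

/-- The set of children of `a`. -/
def children (G : MixedGraph V) (a : V) : Set V := {b | G.dir a b}

/-- Co-parents of `a` (in a DAG): non-neighbors sharing a common child with `a`. -/
def coparents (G : MixedGraph V) (a : V) : Set V :=
  {b | b ≠ a ∧ ¬ G.adj a b ∧ ∃ c, G.dir a c ∧ G.dir b c}

/-- The district of `a`: vertices joined to `a` by a path of bidirected edges
(including `a` itself). -/
def district (G : MixedGraph V) (a : V) : Set V := {b | Relation.ReflTransGen G.bi b a}

/-- `PaP(a) = Pa(a) ∪ Dis(a) ∪ Pa(Dis(a))`. -/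
def paP (G : MixedGraph V) (a : V) : Set V :=
  G.parents a ∪ G.district a ∪ ⋃ b ∈ G.district a, G.parents b

/-- The induced subgraph of `G` over `W`. -/
def induce (G : MixedGraph V) (W : Set V) : MixedGraph V where
  verts := G.verts ∩ W
  dir a b := G.dir a b ∧ a ∈ W ∧ b ∈ W
  bi a b := G.bi a b ∧ a ∈ W ∧ b ∈ W
  bi_symm h := ⟨G.bi_symm h.1, h.2.2, h.2.1⟩
  dir_mem h := ⟨⟨(G.dir_mem h.1).1, h.2.1⟩, (G.dir_mem h.1).2, h.2.2⟩
  bi_mem h := ⟨⟨(G.bi_mem h.1).1, h.2.1⟩, (G.bi_mem h.1).2, h.2.2⟩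

end MixedGraph

/-- Possible orientations of an edge along a path: `fwd` is `a → b`,
`bwd` is `a ← b`, `bidir` is `a ↔ b`. -/
inductive EdgeDir
  | fwd | bwd | bidir

/-- Validity of an orientation mark between consecutive path vertices. -/
def edirValid {V : Type*} (G : MixedGraph V) (a b : V) : EdgeDir → Prop
  | .fwd => G.dir a b
  | .bwd => G.dir b a
  | .bidir => G.bi a b

/-- The edge has an arrowhead at its second (right) endpoint. -/
def headAt2 (e : EdgeDir) : Prop := e = .fwd ∨ e = .bidir

/-- The edge has an arrowhead at its first (left) endpoint. -/
def headAt1 (e : EdgeDir) : Prop := e = .bwd ∨ e = .bidir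

/-- A path in a mixed graph `G` from `x` to `y`: a sequence of distinct vertices
`vert 0, …, vert len` together with an oriented edge of `G` between consecutive
vertices. -/
structure MPath {V : Type*} (G : MixedGraph V) (x y : V) where
  len : ℕ
  len_pos : 0 < len
  vert : ℕ → V
  edir : ℕ → EdgeDir
  first : vert 0 = x
  last : vert len = y
  mem : ∀ i, i ≤ len → vert i ∈ G.verts
  inj : ∀ i j, i ≤ len → j ≤ len → vert i = vert j → i = j
  valid : ∀ i, i < len → edirValid G (vert i) (vert (i + 1)) (edir i)

namespace MPath

variable {V : Type*} {G : MixedGraph V} {x y : V}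

/-- The vertex at interior position `i` (where `0 < i < len`) is a collider on the path:
both incident path edges have an arrowhead at it. -/
def collider (p : MPath G x y) (i : ℕ) : Prop :=
  headAt2 (p.edir (i - 1)) ∧ headAt1 (p.edir i)

/-- The path is blocked by `Z`: some interior vertex is a collider that is not an
ancestor of any vertex of `Z ∪ {x, y}`, or a non-collider belonging to `Z`. -/
def blocked (p : MPath G x y) (Z : Set V) : Prop :=
  ∃ i, 0 < i ∧ i < p.len ∧
    ((p.collider i ∧ ∀ w ∈ Z ∪ ({x, y} : Set V), ¬ G.anc (p.vert i) w) ∨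
     (¬ p.collider i ∧ p.vert i ∈ Z))

/-- A collider path: every interior vertex is a collider on the path. -/
def isColliderPath (p : MPath G x y) : Prop :=
  ∀ i, 0 < i → i < p.len → p.collider i

/-- An inducing path relative to `W2`: every interior non-collider belongs to `W2`,
and every interior collider is an ancestor of `x` or of `y`. -/
def isInducing (p : MPath G x y) (W2 : Set V) : Prop :=
  ∀ i, 0 < i → i < p.len →
    (p.collider i → G.anc (p.vert i) x ∨ G.anc (p.vert i) y) ∧
    (¬ p.collider i → p.vert i ∈ W2)

end MPath

/-- `Z` m-separates `x` and `y` in `G`: every path between `x` and `y` is blocked by `Z`. -/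
def mSep {V : Type*} (G : MixedGraph V) (x y : V) (Z : Set V) : Prop :=
  ∀ p : MPath G x y, p.blocked Z

namespace MixedGraph

variable {V : Type*}

/-- The Markov boundary of `a` in `G`: vertices `b ≠ a` with a collider path to `a`. -/
def mb (G : MixedGraph V) (a : V) : Set V :=
  {b | b ≠ a ∧ ∃ p : MPath G b a, p.isColliderPath}

/-- `G` is a maximal ancestral graph (MAG): no directed cycles, no almost directed
cycles, and every pair of distinct non-neighbor vertices is m-separated by some set. -/
structure IsMAG (G : MixedGraph V) : Prop where
  no_dir_cycle : ∀ a b, G.dir a b → ¬ G.anc b a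
  no_almost_dir_cycle : ∀ a b, G.bi a b → ¬ G.anc b a
  maximal : ∀ a ∈ G.verts, ∀ b ∈ G.verts, a ≠ b → ¬ G.adj a b →
    ∃ Z ⊆ G.verts \ {a, b}, mSep G a b Z

/-- `G` is a DAG: a MAG with no bidirected edges. -/
def IsDAG (G : MixedGraph V) : Prop := G.IsMAG ∧ ∀ a b, ¬ G.bi a b

/-- `x` is removable in `G`: `G` and the induced subgraph `G[verts ∖ {x}]` impose the
same m-separation relations among the vertices of `verts ∖ {x}`. -/
def Removable (G : MixedGraph V) (x : V) : Prop :=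
  ∀ y z, y ∈ G.verts → z ∈ G.verts → y ≠ x → z ≠ x → y ≠ z →
    ∀ Z ⊆ G.verts \ {x, y, z},
      (mSep G y z Z ↔ mSep (G.induce (G.verts \ {x})) y z Z)

/-- There is an inducing path between `a` and `b` in `G` relative to `W2`. -/
def InducingAdj (G : MixedGraph V) (W2 : Set V) (a b : V) : Prop :=
  (∃ p : MPath G a b, p.isInducing W2) ∨ (∃ p : MPath G b a, p.isInducing W2)

/-- The latent projection of `G` onto `W1`: distinct `a, b ∈ W1` are joined iff there is
an inducing path between them in `G` relative to `G.verts ∖ W1`; the edge is `a → b` if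
`a` is an ancestor of `b` in `G` but not conversely, and `a ↔ b` if neither is an
ancestor of the other. -/
def project (G : MixedGraph V) (W1 : Set V) : MixedGraph V where
  verts := W1
  dir a b := a ∈ W1 ∧ b ∈ W1 ∧ a ≠ b ∧ InducingAdj G (G.verts \ W1) a b ∧
    G.anc a b ∧ ¬ G.anc b a
  bi a b := a ∈ W1 ∧ b ∈ W1 ∧ a ≠ b ∧ InducingAdj G (G.verts \ W1) a b ∧
    ¬ G.anc a b ∧ ¬ G.anc b a
  bi_symm h :=
    ⟨h.2.1, h.1, h.2.2.1.symm, Or.symm h.2.2.2.1, h.2.2.2.2.2, h.2.2.2.2.1⟩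
  dir_mem h := ⟨h.1, h.2.1⟩
  bi_mem h := ⟨h.1, h.2.1⟩

/-- Two mixed graphs over the same vertex set impose exactly the same m-separation
relations. -/
def MarkovEquiv (G1 G2 : MixedGraph V) : Prop :=
  ∀ a ∈ G1.verts, ∀ b ∈ G1.verts, a ≠ b → ∀ Z ⊆ G1.verts \ {a, b},
    (mSep G1 a b Z ↔ mSep G2 a b Z)

/-- A list of vertices is an order over (the vertex set of) `G` if it lists each vertex
exactly once. -/
def IsOrder (G : MixedGraph V) (l : List V) : Prop :=
  l.Nodup ∧ ∀ v, v ∈ l ↔ v ∈ G.verts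

/-- An r-order of `G`: an order `(X₁, …, Xₙ)` such that each `Xᵢ` is removable in the
induced subgraph `G[{Xᵢ, …, Xₙ}]`. -/
def IsROrder (G : MixedGraph V) (l : List V) : Prop :=
  IsOrder G l ∧ ∀ (i : ℕ) (h : i < l.length),
    Removable (G.induce {v | v ∈ l.drop i}) (l.get ⟨i, h⟩)

/-- A c-order of a DAG `G`: an order `(X₁, …, Xₙ)` such that each `Xᵢ` has no children
in the induced subgraph `G[{Xᵢ, …, Xₙ}]`. -/
def IsCOrder (G : MixedGraph V) (l : List V) : Prop :=
  IsOrder G l ∧ ∀ (i : ℕ) (h : i < l.length),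
    ∀ v, ¬ (G.induce {v' | v' ∈ l.drop i}).dir (l.get ⟨i, h⟩) v

/-- The maximum in-degree of `G`. -/
noncomputable def deltaIn (G : MixedGraph V) : ℕ :=
  sSup {n | ∃ a ∈ G.verts, n = (G.parents a).ncard}

/-- `Δin⁺(G)`: the maximum of `|PaP(a)|` over the vertices of `G`. -/
noncomputable def deltaInPlus (G : MixedGraph V) : ℕ :=
  sSup {n | ∃ a ∈ G.verts, n = (G.paP a).ncard}

/-- `G` is diamond-free: it contains no induced subgraph on four vertices `a, b, c, d`
whose skeleton has exactly the edges a–b, a–c, a–d, b–d, c–d (with b, c non-adjacent). -/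
def DiamondFree (G : MixedGraph V) : Prop :=
  ¬ ∃ a b c d : V, a ∈ G.verts ∧ b ∈ G.verts ∧ c ∈ G.verts ∧ d ∈ G.verts ∧
    a ≠ b ∧ a ≠ c ∧ a ≠ d ∧ b ≠ c ∧ b ≠ d ∧ c ≠ d ∧
    G.adj a b ∧ G.adj a c ∧ G.adj a d ∧ G.adj b d ∧ G.adj c d ∧ ¬ G.adj b c

end MixedGraph

/-- The cost of an order `(X₁, …, Xₙ)`: `Σₜ |Ne(Xₜ; G_{Vₜ})|` where `Vₜ = {Xₜ, …, Xₙ}`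
and `G_{Vₜ}` is the latent projection of `G` onto `Vₜ` (the term for `t = n` is zero). -/
noncomputable def orderCost {V : Type*} (G : MixedGraph V) : List V → ℕ
  | [] => 0
  | x :: rest => ((G.project {v | v ∈ x :: rest}).neighbors x).ncard + orderCost G rest



/-! ### Auxiliary development -/

section Aux

open MixedGraph

variable {V : Type*}

/-- Bool-valued head mark at first endpoint. -/
def bhd1 : EdgeDir → Bool
  | .fwd => false | .bwd => true | .bidir => true

/-- Bool-valued head mark at second endpoint. -/
def bhd2 : EdgeDir → Bool
  | .fwd => true | .bwd => false | .bidir => true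

lemma edirValid_fwd {G : MixedGraph V} {a b : V} : edirValid G a b .fwd ↔ G.dir a b := Iff.rfl
lemma edirValid_bwd {G : MixedGraph V} {a b : V} : edirValid G a b .bwd ↔ G.dir b a := Iff.rfl
lemma edirValid_bidir {G : MixedGraph V} {a b : V} : edirValid G a b .bidir ↔ G.bi a b := Iff.rfl

lemma bhd1_iff (e : EdgeDir) : bhd1 e = true ↔ headAt1 e := by
  cases e <;> simp [bhd1, headAt1]

lemma bhd2_iff (e : EdgeDir) : bhd2 e = true ↔ headAt2 e := by
  cases e <;> simp [bhd2, headAt2]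

lemma bhd1_eq_false {e : EdgeDir} : bhd1 e = false ↔ e = .fwd := by
  cases e <;> simp [bhd1]

lemma bhd2_eq_false {e : EdgeDir} : bhd2 e = false ↔ e = .bwd := by
  cases e <;> simp [bhd2]

lemma MixedGraph.anc_refl (G : MixedGraph V) (a : V) : G.anc a a :=
  Relation.ReflTransGen.refl

lemma MixedGraph.anc_trans {G : MixedGraph V} {a b c : V} (h1 : G.anc a b) (h2 : G.anc b c) :
    G.anc a c := Relation.ReflTransGen.trans h1 h2

lemma MixedGraph.dir_anc {G : MixedGraph V} {a b : V} (h : G.dir a b) : G.anc a b :=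
  Relation.ReflTransGen.single h

lemma MixedGraph.IsMAG.anc_antisymm {G : MixedGraph V} (hG : G.IsMAG) {a b : V}
    (hab : a ≠ b) (h1 : G.anc a b) : ¬ G.anc b a := by
  intro h2
  rcases h1.cases_head with h | ⟨c, hac, hcb⟩
  · exact hab h
  · exact hG.no_dir_cycle a c hac (hcb.trans h2)

lemma MixedGraph.IsMAG.no_self_dir {G : MixedGraph V} (hG : G.IsMAG) (a : V) : ¬ G.dir a a :=
  fun h => hG.no_dir_cycle a a h (G.anc_refl a)

lemma MixedGraph.IsMAG.no_self_bi {G : MixedGraph V} (hG : G.IsMAG) (a : V) : ¬ G.bi a a :=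
  fun h => hG.no_almost_dir_cycle a a h (G.anc_refl a)

lemma MixedGraph.IsMAG.no_self_edge {G : MixedGraph V} (hG : G.IsMAG) (a : V) (e : EdgeDir) :
    ¬ edirValid G a a e := by
  cases e
  · exact hG.no_self_dir a
  · exact hG.no_self_dir a
  · exact hG.no_self_bi a

lemma MixedGraph.IsMAG.wf_desc [Fintype V] {G : MixedGraph V} (hG : G.IsMAG) :
    WellFounded (fun c a : V => Relation.TransGen G.dir a c) := by
  letI : IsTrans V (fun c a : V => Relation.TransGen G.dir a c) :=
    ⟨fun _ _ _ h1 h2 => h2.trans h1⟩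
  letI : IsIrrefl V (fun c a : V => Relation.TransGen G.dir a c) := ⟨by
    intro a h
    obtain ⟨b, hab, hba⟩ := (Relation.TransGen.head'_iff).mp h
    exact hG.no_dir_cycle a b hab hba⟩
  exact Finite.wellFounded_of_trans_of_irrefl _

/-! #### Open walks as lists of steps -/

/-- Openness condition at a vertex given the Boolean "is a collider here" flag. -/
def wcond (G : MixedGraph V) (Z T : Set V) (v : V) (b : Bool) : Prop :=
  (b = true → ∃ t ∈ T, G.anc v t) ∧ (b = false → v ∉ Z)

/-- Open walk from `v` (entered with head-mark `h`) to `z`. -/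
def ow (G : MixedGraph V) (Z T : Set V) (z : V) : V → Bool → List (EdgeDir × V) → Prop
  | v, _, [] => v = z
  | v, h, (e, w) :: s => edirValid G v w e ∧ wcond G Z T v (h && bhd1 e) ∧ ow G Z T z w (bhd2 e) s

/-- Partial open walk from `v` reaching `u` with mark `m`. -/
def owT (G : MixedGraph V) (Z T : Set V) : V → Bool → List (EdgeDir × V) → V → Bool → Prop
  | v, h, [], u, m => v = u ∧ h = m
  | v, h, (e, w) :: s, u, m => edirValid G v w e ∧ wcond G Z T v (h && bhd1 e) ∧
      owT G Z T w (bhd2 e) s u m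

variable {G : MixedGraph V} {Z T : Set V} {z : V}

lemma ow_of_owT : ∀ (s1 : List (EdgeDir × V)) {v : V} {h : Bool} {u m s2},
    owT G Z T v h s1 u m → ow G Z T z u m s2 → ow G Z T z v h (s1 ++ s2) := by
  intro s1
  induction s1 with
  | nil => intro v h u m s2 h1 h2; obtain ⟨rfl, rfl⟩ := h1; exact h2
  | cons a t ih =>
      intro v h u m s2 h1 h2
      obtain ⟨e, w⟩ := a
      exact ⟨h1.1, h1.2.1, ih h1.2.2 h2⟩

lemma ow_append_split : ∀ (s1 : List (EdgeDir × V)) {v : V} {h : Bool} {s2},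
    ow G Z T z v h (s1 ++ s2) → ∃ u m, owT G Z T v h s1 u m ∧ ow G Z T z u m s2 := by
  intro s1
  induction s1 with
  | nil => intro v h s2 hw; exact ⟨v, _, ⟨rfl, rfl⟩, hw⟩
  | cons a t ih =>
      intro v h s2 hw
      obtain ⟨e, w⟩ := a
      obtain ⟨h1, h2, h3⟩ := hw
      obtain ⟨u, m, hT, hw2⟩ := ih h3
      exact ⟨u, m, ⟨h1, h2, hT⟩, hw2⟩

lemma owT_snoc : ∀ (s : List (EdgeDir × V)) {v h u m w e},
    owT G Z T v h s u m → edirValid G u w e → wcond G Z T u (m && bhd1 e) →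
    owT G Z T v h (s ++ [(e, w)]) w (bhd2 e) := by
  intro s
  induction s with
  | nil =>
      intro v h u m w e h1 h2 h3
      obtain ⟨rfl, rfl⟩ := h1
      exact ⟨h2, h3, rfl, rfl⟩
  | cons a t ih =>
      intro v h u m w e h1 h2 h3
      obtain ⟨e0, w0⟩ := a
      exact ⟨h1.1, h1.2.1, ih h1.2.2 h2 h3⟩

/-- Directed-segment lemma: if a walk leaves `v` along a directed edge, `v` is an
ancestor of some element of `T`. -/
lemma ow_fwd_anc (hzT : z ∈ T) : ∀ (s : List (EdgeDir × V)) (v w : V) (h : Bool),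
    ow G Z T z v h ((EdgeDir.fwd, w) :: s) → ∃ t ∈ T, G.anc v t := by
  intro s
  induction s with
  | nil =>
      intro v w h hw
      obtain ⟨hval, _, hz⟩ := hw
      exact ⟨z, hzT, by rw [show w = z from hz] at hval; exact Relation.ReflTransGen.single hval⟩
  | cons a t ih =>
      intro v w h hw
      obtain ⟨e2, w2⟩ := a
      obtain ⟨hval, _, hrest⟩ := hw
      have hval' : G.dir v w := edirValid_fwd.mp hval
      by_cases hb : bhd1 e2 = true
      · obtain ⟨_, hc2, _⟩ := hrest
        obtain ⟨t', ht', hanc⟩ := hc2.1 (by simp [hb, bhd2])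
        exact ⟨t', ht', (Relation.ReflTransGen.single hval').trans hanc⟩
      · have he2 : e2 = .fwd := bhd1_eq_false.mp (by simpa using hb)
        subst he2
        obtain ⟨t', ht', hanc⟩ := ih w w2 true hrest
        exact ⟨t', ht', (Relation.ReflTransGen.single hval').trans hanc⟩

lemma ow_mark_true {v : V} (hw : ∃ t ∈ T, G.anc v t) :
    ∀ {s : List (EdgeDir × V)} {m : Bool}, ow G Z T z v m s → ow G Z T z v true s := by
  intro s m h
  cases s with
  | nil => exact h
  | cons a t =>
      obtain ⟨e, w⟩ := a
      obtain ⟨h1, h2, h3⟩ := h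
      refine ⟨h1, ⟨fun _ => hw, fun hf => ?_⟩, h3⟩
      have : bhd1 e = false := by simpa using hf
      exact h2.2 (by simp [this])


/-- Every open walk can be pruned to an open walk with no repeated vertices. -/
lemma ow_nodup (hzT : z ∈ T) (hns : ∀ (a : V) (e : EdgeDir), ¬ edirValid G a a e) :
    ∀ (n : ℕ) (s : List (EdgeDir × V)) (v : V) (h : Bool), s.length ≤ n →
    ow G Z T z v h s →
    ∃ s' : List (EdgeDir × V), ow G Z T z v h s' ∧ (v :: s'.map Prod.snd).Nodup ∧
      (∀ u ∈ s'.map Prod.snd, u ∈ s.map Prod.snd) := by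
  intro n
  induction n with
  | zero =>
      intro s v h hl hw
      have hs0 : s = [] := List.length_eq_zero_iff.mp (Nat.le_zero.mp hl)
      subst hs0
      exact ⟨[], hw, by simp, by simp⟩
  | succ n ih =>
      intro s v h hl hw
      by_cases hnd : (v :: s.map Prod.snd).Nodup
      · exact ⟨s, hw, hnd, fun _ ht => ht⟩
      by_cases hv : v ∈ s.map Prod.snd
      · obtain ⟨pr, hpr, hpv⟩ := List.mem_map.mp hv
        obtain ⟨s1, s2, hs⟩ := List.append_of_mem hpr
        obtain ⟨e, w⟩ := pr
        rw [show w = v from hpv] at hs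
        subst hs
        obtain ⟨u, m, hT, hw2⟩ := ow_append_split s1 hw
        obtain ⟨hval, hcu, hw3⟩ := hw2
        have hnew : ow G Z T z v h s2 := by
          cases s2 with
          | nil => exact hw3
          | cons a t =>
            obtain ⟨e2, w2⟩ := a
            obtain ⟨hval2, hc2, hw4⟩ := hw3
            refine ⟨hval2, ⟨?_, ?_⟩, hw4⟩
            · intro htrue
              rw [Bool.and_eq_true] at htrue
              obtain ⟨hh, _⟩ := htrue
              cases s1 with
              | nil =>
                  obtain ⟨rfl, rfl⟩ := hT
                  exact absurd hval (hns v e)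
              | cons a0 t0 =>
                  obtain ⟨e0, w0⟩ := a0
                  obtain ⟨hval0, hc0, -⟩ := id hw
                  by_cases hb0 : bhd1 e0 = true
                  · exact hc0.1 (by simp [hh, hb0])
                  · have he0 : e0 = .fwd := bhd1_eq_false.mp (by simpa using hb0)
                    subst he0
                    exact ow_fwd_anc hzT _ v w0 h hw
            · intro hfalse
              by_cases hb2 : bhd1 e2 = true
              · have hh : h = false := by
                  cases h
                  · rfl
                  · rw [hb2] at hfalse; simp at hfalse
                cases s1 with
                | nil =>
                    obtain ⟨rfl, rfl⟩ := hT
                    exact absurd hval (hns v e)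
                | cons a0 t0 =>
                    obtain ⟨e0, w0⟩ := a0
                    obtain ⟨-, hc0, -⟩ := id hw
                    exact hc0.2 (by simp [hh])
              · have hb2' : bhd1 e2 = false := by simpa using hb2
                exact hc2.2 (by simp [hb2'])
        have hlen : s2.length ≤ n := by
          simp [List.length_append] at hl
          omega
        obtain ⟨s', hw', hnd', hsub'⟩ := ih s2 v h hlen hnew
        refine ⟨s', hw', hnd', fun u hu => ?_⟩
        have := hsub' u hu
        simp only [List.map_append, List.mem_append, List.map_cons, List.mem_cons]
        tauto
      · cases s with
        | nil => simp at hnd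
        | cons a t =>
            obtain ⟨e0, w0⟩ := a
            obtain ⟨hval0, hc0, hw2⟩ := hw
            have hlen : t.length ≤ n := by simpa using hl
            obtain ⟨t', hw', hnd', hsub'⟩ := ih t w0 (bhd2 e0) hlen hw2
            refine ⟨(e0, w0) :: t', ⟨hval0, hc0, hw'⟩, ?_, ?_⟩
            · rw [List.map_cons, List.nodup_cons]
              refine ⟨?_, hnd'⟩
              intro hmem
              rcases List.mem_cons.mp hmem with h1 | h1
              · exact hv (by simp [h1])
              · exact hv (by simp [hsub' v h1])
            · intro u hu
              simp only [List.map_cons, List.mem_cons] at hu ⊢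
              rcases hu with h1 | h1
              · exact Or.inl h1
              · exact Or.inr (hsub' u h1)


lemma getD_irrel {α : Type*} (l : List α) (i : ℕ) (h : i < l.length) (d1 d2 : α) :
    l.getD i d1 = l.getD i d2 := by
  rw [List.getD_eq_getElem l d1 h, List.getD_eq_getElem l d2 h]

lemma edir_mem {G : MixedGraph V} {a b : V} {e : EdgeDir} (h : edirValid G a b e) :
    a ∈ G.verts ∧ b ∈ G.verts := by
  cases e
  · exact G.dir_mem h
  · exact ⟨(G.dir_mem h).2, (G.dir_mem h).1⟩
  · exact G.bi_mem h

/-- Indexed description of an open walk. -/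
lemma ow_get : ∀ (s : List (EdgeDir × V)) (v : V) (h : Bool), ow G Z T z v h s →
    ((v :: s.map Prod.snd).getD s.length v = z) ∧
    ∀ i, i < s.length →
      edirValid G ((v :: s.map Prod.snd).getD i v) ((v :: s.map Prod.snd).getD (i+1) v)
        ((s.map Prod.fst).getD i .fwd) ∧
      wcond G Z T ((v :: s.map Prod.snd).getD i v)
        ((if i = 0 then h else bhd2 ((s.map Prod.fst).getD (i-1) .fwd)) &&
          bhd1 ((s.map Prod.fst).getD i .fwd)) := by
  intro s
  induction s with
  | nil =>
      intro v h hw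
      exact ⟨hw, fun i hi => absurd hi (by simp)⟩
  | cons a t ih =>
      intro v h hw
      obtain ⟨e, w⟩ := a
      obtain ⟨hval, hc, hw2⟩ := hw
      obtain ⟨ih2, ih1⟩ := ih w (bhd2 e) hw2
      constructor
      · have hlen : t.length < (w :: t.map Prod.snd).length := by simp
        calc ((v :: ((e, w) :: t).map Prod.snd)).getD (((e, w) :: t).length) v
            = (w :: t.map Prod.snd).getD t.length v := by
              simp only [List.map_cons, List.length_cons, List.getD_cons_succ]
          _ = (w :: t.map Prod.snd).getD t.length w := getD_irrel _ _ hlen _ _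
          _ = z := ih2
      · intro i hi
        cases i with
        | zero =>
            refine ⟨?_, ?_⟩
            · simpa using hval
            · simpa using hc
        | succ j =>
            have hj : j < t.length := by simpa using hi
            obtain ⟨e1, c1⟩ := ih1 j hj
            have hb1 : j < (w :: t.map Prod.snd).length := by simp; omega
            have hb2 : j + 1 < (w :: t.map Prod.snd).length := by simp; omega
            constructor
            · have g1 : ((v :: ((e, w) :: t).map Prod.snd)).getD (j+1) v
                  = (w :: t.map Prod.snd).getD j w := by
                simp only [List.map_cons, List.getD_cons_succ]
                exact getD_irrel _ _ hb1 _ _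
              have g2 : ((v :: ((e, w) :: t).map Prod.snd)).getD (j+2) v
                  = (w :: t.map Prod.snd).getD (j+1) w := by
                simp only [List.map_cons, List.getD_cons_succ]
                exact getD_irrel _ _ hb2 _ _
              have g3 : ((((e, w) :: t)).map Prod.fst).getD (j+1) EdgeDir.fwd
                  = (t.map Prod.fst).getD j EdgeDir.fwd := by
                simp only [List.map_cons, List.getD_cons_succ]
              rw [g1, g2, g3]
              exact e1
            · have g1 : ((v :: ((e, w) :: t).map Prod.snd)).getD (j+1) v
                  = (w :: t.map Prod.snd).getD j w := by
                simp only [List.map_cons, List.getD_cons_succ]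
                exact getD_irrel _ _ hb1 _ _
              have g3 : ((((e, w) :: t)).map Prod.fst).getD (j+1) EdgeDir.fwd
                  = (t.map Prod.fst).getD j EdgeDir.fwd := by
                simp only [List.map_cons, List.getD_cons_succ]
              have g4 : (if j + 1 = 0 then h
                    else bhd2 (((((e, w) :: t)).map Prod.fst).getD (j + 1 - 1) EdgeDir.fwd))
                  = (if j = 0 then bhd2 e else bhd2 ((t.map Prod.fst).getD (j-1) EdgeDir.fwd)) := by
                cases j with
                | zero => simp
                | succ j' => simp only [List.map_cons, List.getD_cons_succ]; rfl
              rw [g1, g3, g4]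
              exact c1

/-- From a duplicate-free open walk to an unblocked `MPath`. -/
lemma ow_to_mpath {y : V} (hT : T = Z ∪ {y, z}) (hyz : y ≠ z)
    (s : List (EdgeDir × V)) (hw : ow G Z T z y false s)
    (hnd : (y :: s.map Prod.snd).Nodup) :
    ∃ p : MPath G y z, ¬ p.blocked Z := by
  have hs0 : s ≠ [] := by
    intro h; subst h; exact hyz hw
  have hlen : 0 < s.length := List.length_pos_iff.mpr hs0
  obtain ⟨hlast, hstep⟩ := ow_get s y false hw
  set L := y :: s.map Prod.snd with hL
  have hLlen : L.length = s.length + 1 := by simp [hL]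
  refine ⟨⟨s.length, hlen, fun i => L.getD i y, fun i => (s.map Prod.fst).getD i .fwd,
    by simp [hL], hlast, ?_, ?_, fun i hi => (hstep i hi).1⟩, ?_⟩
  · -- mem
    intro i hi
    show L.getD i y ∈ G.verts
    rcases Nat.lt_or_ge i s.length with h1 | h1
    · exact (edir_mem (hstep i h1).1).1
    · have hieq : i = s.length := le_antisymm hi h1
      have h2 := (edir_mem (hstep (s.length - 1) (by omega)).1).2
      have harith : s.length - 1 + 1 = s.length := by omega
      rw [harith] at h2
      rwa [hieq]
  · -- inj
    intro i j hi hj hij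
    have hi' : i < L.length := by omega
    have hj' : j < L.length := by omega
    change L.getD i y = L.getD j y at hij
    rw [List.getD_eq_getElem L y hi', List.getD_eq_getElem L y hj'] at hij
    have : (⟨i, hi'⟩ : Fin L.length) = ⟨j, hj'⟩ :=
      List.nodup_iff_injective_get.mp hnd (by
        simp only [List.get_eq_getElem]; exact hij)
    exact congrArg Fin.val this
  · -- not blocked
    rintro ⟨i, hi0, hilen, hcase⟩
    obtain ⟨-, hcnd⟩ := hstep i hilen
    rcases hcase with ⟨hcol, hnoanc⟩ | ⟨hncol, hinZ⟩
    · obtain ⟨hc2, hc1⟩ := hcol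
      obtain ⟨t, htT, hanc⟩ := hcnd.1 (by
        rw [if_neg (show ¬ i = 0 by omega)]
        rw [show bhd2 ((s.map Prod.fst).getD (i-1) .fwd) = true from (bhd2_iff _).mpr hc2,
          show bhd1 ((s.map Prod.fst).getD i .fwd) = true from (bhd1_iff _).mpr hc1]
        rfl)
      exact hnoanc t (by rwa [hT] at htT) hanc
    · refine (hcnd.2 ?_) hinZ
      rw [if_neg (show ¬ i = 0 by omega)]
      by_cases hb2 : bhd2 ((s.map Prod.fst).getD (i-1) .fwd) = true
      · by_cases hb1 : bhd1 ((s.map Prod.fst).getD i .fwd) = true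
        · exact absurd ⟨(bhd2_iff _).mp hb2, (bhd1_iff _).mp hb1⟩ hncol
        · rw [show bhd1 ((s.map Prod.fst).getD i .fwd) = false from (by
            cases hh : bhd1 ((s.map Prod.fst).getD i .fwd)
            · rfl
            · exact absurd hh hb1)]
          simp
      · rw [show bhd2 ((s.map Prod.fst).getD (i-1) .fwd) = false from (by
          cases hh : bhd2 ((s.map Prod.fst).getD (i-1) .fwd)
          · rfl
          · exact absurd hh hb2)]
        simp


/-! #### From paths to open walks -/

/-- Steps of `p` along positions `[0, l)`. -/
def pstep {G : MixedGraph V} {y z : V} (p : MPath G y z) (l : ℕ) : List (EdgeDir × V) :=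
  (List.range l).map (fun i => (p.edir i, p.vert (i+1)))

/-- Steps of `p` along positions `[r, len)`. -/
def sufstep {G : MixedGraph V} {y z : V} (p : MPath G y z) (r : ℕ) : List (EdgeDir × V) :=
  (List.range (p.len - r)).map (fun j => (p.edir (r+j), p.vert (r+j+1)))

/-- Incoming head-mark of `p` at position `l`. -/
def pmark {G : MixedGraph V} {y z : V} (p : MPath G y z) (l : ℕ) : Bool :=
  if l = 0 then false else bhd2 (p.edir (l-1))

variable {y : V} {p : MPath G y z}

lemma mpath_cond (hT : T = Z ∪ {y, z}) (hnb : ¬ p.blocked Z) :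
    ∀ i, 0 < i → i < p.len → wcond G Z T (p.vert i) (bhd2 (p.edir (i-1)) && bhd1 (p.edir i)) := by
  intro i h0 hl
  constructor
  · intro htrue
    rw [Bool.and_eq_true] at htrue
    by_contra hno
    push_neg at hno
    refine hnb ⟨i, h0, hl, Or.inl ⟨⟨(bhd2_iff _).mp htrue.1, (bhd1_iff _).mp htrue.2⟩,
      fun w hw => hno w (by rw [hT]; exact hw)⟩⟩
  · intro hfalse hinZ
    refine hnb ⟨i, h0, hl, Or.inr ⟨fun hcol => ?_, hinZ⟩⟩
    obtain ⟨h2, h1⟩ := hcol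
    rw [(bhd2_iff _).mpr h2, (bhd1_iff _).mpr h1] at hfalse
    simp at hfalse

lemma mpath_prefix (hT : T = Z ∪ {y, z}) (hnb : ¬ p.blocked Z) (hyZ : y ∉ Z) :
    ∀ l, l ≤ p.len → owT G Z T y false (pstep p l) (p.vert l) (pmark p l) := by
  intro l
  induction l with
  | zero =>
      intro _
      exact ⟨p.first.symm, rfl⟩
  | succ l ih =>
      intro hl
      have h1 : l ≤ p.len := by omega
      have hstepl : pstep p (l+1) = pstep p l ++ [(p.edir l, p.vert (l+1))] := by
        simp [pstep, List.range_succ]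
      rw [hstepl]
      have hc : wcond G Z T (p.vert l) (pmark p l && bhd1 (p.edir l)) := by
        cases l with
        | zero =>
            refine ⟨fun h => by simp [pmark] at h, fun _ => ?_⟩
            rw [p.first]; exact hyZ
        | succ l' =>
            have := mpath_cond hT hnb (l'+1) (by omega) (by omega)
            simpa [pmark] using this
      have := owT_snoc _ (ih h1) (p.valid l (by omega)) hc
      have hm : pmark p (l+1) = bhd2 (p.edir l) := by simp [pmark]
      rwa [← hm] at this

lemma mpath_suffix (hT : T = Z ∪ {y, z}) (hnb : ¬ p.blocked Z) :
    ∀ (n r : ℕ), p.len - r = n → r ≤ p.len → ∀ b : Bool,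
    (r < p.len → wcond G Z T (p.vert r) (b && bhd1 (p.edir r))) →
    ow G Z T z (p.vert r) b (sufstep p r) := by
  intro n
  induction n with
  | zero =>
      intro r h0 hr b _
      have h1 : sufstep p r = [] := by simp [sufstep, show p.len - r = 0 from h0]
      rw [h1]
      show p.vert r = z
      rw [show r = p.len by omega]
      exact p.last
  | succ n ih =>
      intro r h0 hr b hc
      have hrlen : r < p.len := by omega
      have hsuf : sufstep p r = (p.edir r, p.vert (r+1)) :: sufstep p (r+1) := by
        unfold sufstep
        rw [show p.len - r = (p.len - (r+1)) + 1 by omega]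
        rw [List.range_succ_eq_map, List.map_cons, List.map_map]
        congr 1
        apply List.map_congr_left
        intro j _
        simp only [Function.comp_apply]
        rw [show r + (j+1) = r + 1 + j by omega]
      rw [hsuf]
      refine ⟨p.valid r hrlen, hc hrlen, ?_⟩
      exact ih (r+1) (by omega) (by omega) (bhd2 (p.edir r))
        (fun hlt => mpath_cond hT hnb (r+1) (by omega) hlt)

lemma mpath_to_ow (hT : T = Z ∪ {y, z}) (hnb : ¬ p.blocked Z) (hyZ : y ∉ Z) :
    ow G Z T z y false (sufstep p 0) := by
  have := mpath_suffix hT hnb (p.len - 0) 0 rfl (by omega) false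
    (fun _ => ⟨fun h => by simp at h, fun _ => by rw [p.first]; exact hyZ⟩)
  rwa [p.first] at this

/-! #### Transfer between `G` and induced subgraphs -/

lemma edirValid_induce_le {W : Set V} {a b : V} {e : EdgeDir}
    (h : edirValid (G.induce W) a b e) : edirValid G a b e := by
  cases e
  · exact h.1
  · exact h.1
  · exact h.1

lemma induce_anc_le {W : Set V} {a b : V} (h : (G.induce W).anc a b) : G.anc a b :=
  Relation.ReflTransGen.mono (p := G.dir) (fun _ _ hd => hd.1) a b h

/-- Lift a path in an induced subgraph to the ambient graph. -/
def liftPath {W : Set V} {y z : V} (q : MPath (G.induce W) y z) : MPath G y z where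
  len := q.len
  len_pos := q.len_pos
  vert := q.vert
  edir := q.edir
  first := q.first
  last := q.last
  mem := fun i hi => (q.mem i hi).1
  inj := q.inj
  valid := fun i hi => edirValid_induce_le (q.valid i hi)

lemma mSep_induce_of_mSep {W : Set V} {y z : V} {Z : Set V} (h : mSep G y z Z) :
    mSep (G.induce W) y z Z := by
  intro q
  obtain ⟨i, h0, h1, hc⟩ := h (liftPath q)
  refine ⟨i, h0, h1, ?_⟩
  rcases hc with ⟨hcol, hno⟩ | hx
  · exact Or.inl ⟨hcol, fun w hw ha => hno w hw (induce_anc_le ha)⟩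
  · exact Or.inr hx

lemma mSep_induce_diff {x y z : V} {Z : Set V} (h : mSep G y z Z) :
    mSep (G.induce (G.verts \ {x})) y z (Z \ {x}) := by
  intro q
  obtain ⟨i, h0, h1, hc⟩ := h (liftPath q)
  refine ⟨i, h0, h1, ?_⟩
  rcases hc with ⟨hcol, hno⟩ | ⟨hncol, hinZ⟩
  · refine Or.inl ⟨hcol, fun w hw ha => ?_⟩
    refine hno w ?_ (induce_anc_le ha)
    rcases hw with hw | hw
    · exact Or.inl hw.1
    · exact Or.inr hw
  · refine Or.inr ⟨hncol, ⟨hinZ, ?_⟩⟩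
    have := (q.mem i (le_of_lt h1)).2
    exact this.2

lemma not_mSep_iff {G : MixedGraph V} {y z : V} {Z : Set V} :
    ¬ mSep G y z Z ↔ ∃ p : MPath G y z, ¬ p.blocked Z := by
  simp [mSep, not_forall]


/-! #### Chains of directed edges -/

/-- A directed chain from `a` to `b` whose vertices other than `b` avoid `Z`. -/
def DChain (G : MixedGraph V) (Z : Set V) : V → List V → V → Prop
  | a, [], b => a = b
  | a, c :: vs, b => G.dir a c ∧ a ∉ Z ∧ DChain G Z c vs b

lemma dchain_anc : ∀ (vs : List V) (a b : V), DChain G Z a vs b → G.anc a b := by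
  intro vs
  induction vs with
  | nil => intro a b h; obtain rfl : a = b := h; exact G.anc_refl a
  | cons c vs' ih => intro a b h; exact (G.dir_anc h.1).trans (ih c b h.2.2)

lemma dchain_mem_anc : ∀ (vs : List V) (a b : V), DChain G Z a vs b →
    ∀ c ∈ vs, G.anc a c := by
  intro vs
  induction vs with
  | nil => intro a b _ c hc; simp at hc
  | cons c0 vs' ih =>
      intro a b h c hc
      rcases List.mem_cons.mp hc with rfl | hc'
      · exact G.dir_anc h.1
      · exact (G.dir_anc h.1).trans (ih c0 b h.2.2 c hc')

lemma esc [Fintype V] (hG : G.IsMAG) {T : Set V} (hZT : Z ⊆ T) {w0 : V} (hw0 : w0 ∈ T) :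
    ∀ a, G.anc a w0 → ∃ b ∈ T, ∃ vs, DChain G Z a vs b := by
  intro a
  refine hG.wf_desc.induction
    (C := fun a => G.anc a w0 → ∃ b ∈ T, ∃ vs, DChain G Z a vs b) a ?_
  intro a IH haw
  by_cases haT : a ∈ T
  · exact ⟨a, haT, [], rfl⟩
  · have hane : a ≠ w0 := fun h => haT (h ▸ hw0)
    rcases haw.cases_head with h | ⟨c, hac, hcw⟩
    · exact absurd h hane
    · obtain ⟨b, hbT, vs, hch⟩ := IH c (Relation.TransGen.single hac) hcw
      exact ⟨b, hbT, c :: vs, hac, fun hZ => haT (hZT hZ), hch⟩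

/-- Down-and-back excursion through a `Z`-member turning point. -/
lemma tour {T : Set V} (hZT : Z ⊆ T) : ∀ (vs : List V) (c b : V), DChain G Z c vs b → b ∈ Z →
    ∀ (e' : EdgeDir) (w' : V) (rest : List (EdgeDir × V)), bhd1 e' = true →
    edirValid G c w' e' → ow G Z T z w' (bhd2 e') rest →
    ∃ mid, ow G Z T z c true (mid ++ (e', w') :: rest) ∧ ∀ q ∈ mid, q.2 ∈ c :: vs := by
  intro vs
  induction vs with
  | nil =>
      intro c b hch hbZ e' w' rest he' hval hrest
      obtain rfl : c = b := hch
      exact ⟨[], ⟨hval, ⟨fun _ => ⟨c, hZT hbZ, G.anc_refl c⟩, fun hf => by simp [he'] at hf⟩,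
        hrest⟩, by simp⟩
  | cons c2 vs' ih =>
      intro c b hch hbZ e' w' rest he' hval hrest
      obtain ⟨hdc, hcZ, hch'⟩ := hch
      have hrest2 : ow G Z T z c false ((e', w') :: rest) :=
        ⟨hval, ⟨fun h => by simp at h, fun _ => hcZ⟩, hrest⟩
      obtain ⟨mid2, how2, hsub2⟩ := ih c2 b hch' hbZ .bwd c ((e', w') :: rest) rfl hdc hrest2
      refine ⟨(.fwd, c2) :: (mid2 ++ [(.bwd, c)]), ?_, ?_⟩
      · have hlist : ((EdgeDir.fwd, c2) :: (mid2 ++ [(.bwd, c)])) ++ (e', w') :: rest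
            = (EdgeDir.fwd, c2) :: (mid2 ++ (.bwd, c) :: (e', w') :: rest) := by simp
        rw [hlist]
        exact ⟨hdc, ⟨fun h => by simp [bhd1] at h, fun _ => hcZ⟩, how2⟩
      · intro q hq
        rcases List.mem_cons.mp hq with rfl | hq'
        · simp
        · rcases List.mem_append.mp hq' with hq'' | hq''
          · have := hsub2 q hq''
            simp only [List.mem_cons] at this ⊢
            tauto
          · simp at hq''
            simp [hq'']

/-- Descend a chain all the way to `z`. -/
lemma downz {T : Set V} : ∀ (vs : List V) (a : V), DChain G Z a vs z → ∀ m : Bool,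
    ow G Z T z a m (vs.map (fun c => (EdgeDir.fwd, c))) := by
  intro vs
  induction vs with
  | nil => intro a h m; exact h
  | cons c vs' ih =>
      intro a h m
      exact ⟨h.1, ⟨fun hh => by simp [bhd1] at hh, fun _ => h.2.1⟩, ih c h.2.2 _⟩

/-- Climb a chain upwards from its endpoint. -/
lemma upy {T : Set V} : ∀ (vs : List V) (a b : V), DChain G Z a vs b → b ∉ Z →
    ∀ rest, ow G Z T z a false rest →
    ∃ ups, ow G Z T z b false (ups ++ rest) ∧ ∀ q ∈ ups, q.2 = a ∨ q.2 ∈ vs := by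
  intro vs
  induction vs with
  | nil =>
      intro a b h hbZ rest hrest
      obtain rfl : a = b := h
      exact ⟨[], hrest, by simp⟩
  | cons c vs' ih =>
      intro a b h hbZ rest hrest
      obtain ⟨hdc, haZ, h'⟩ := h
      have hcZ : c ∉ Z := by
        cases vs' with
        | nil => obtain rfl : c = b := h'; exact hbZ
        | cons d vs'' => exact h'.2.1
      have hrest' : ow G Z T z c false ((EdgeDir.bwd, a) :: rest) :=
        ⟨hdc, ⟨fun hh => by simp at hh, fun _ => hcZ⟩, hrest⟩
      obtain ⟨ups', how', hsub'⟩ := ih c b h' hbZ _ hrest'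
      refine ⟨ups' ++ [(.bwd, a)], by simpa [List.append_assoc] using how', ?_⟩
      intro q hq
      rcases List.mem_append.mp hq with hq' | hq'
      · rcases hsub' q hq' with h1 | h1
        · exact Or.inr (by simp [h1])
        · exact Or.inr (by simp [h1])
      · simp at hq'
        simp [hq']

/-! #### Small path constructors -/

def mkPath1 {a b : V} (e : EdgeDir) (hv : edirValid G a b e) (hab : a ≠ b) : MPath G a b where
  len := 1
  len_pos := one_pos
  vert := fun i => if i = 0 then a else b
  edir := fun _ => e
  first := by simp
  last := by simp
  mem := by
    intro i _
    by_cases h : i = 0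
    · simp [h]; exact (edir_mem hv).1
    · simp [h]; exact (edir_mem hv).2
  inj := by
    intro i j hi hj hij
    interval_cases i <;> interval_cases j <;> simp_all
  valid := by
    intro i hi
    have : i = 0 := by omega
    subst this
    simpa using hv

def mkPath2 {a c b : V} (e1 e2 : EdgeDir) (h1 : edirValid G a c e1) (h2 : edirValid G c b e2)
    (hac : a ≠ c) (hcb : c ≠ b) (hab : a ≠ b) : MPath G a b where
  len := 2
  len_pos := by omega
  vert := fun i => if i = 0 then a else if i = 1 then c else b
  edir := fun i => if i = 0 then e1 else e2
  first := by simp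
  last := by simp
  mem := by
    intro i hi
    by_cases h : i = 0
    · simp [h]; exact (edir_mem h1).1
    by_cases h' : i = 1
    · simp [h, h']; exact (edir_mem h2).1
    · simp [h, h']; exact (edir_mem h2).2
  inj := by
    intro i j hi hj hij
    interval_cases i <;> interval_cases j <;> simp_all
  valid := by
    intro i hi
    interval_cases i
    · simpa using h1
    · simpa using h2


/-! #### Consequences of `project = induce` -/

lemma W2_eq {x : V} (hx : x ∈ G.verts) : G.verts \ (G.verts \ {x}) = {x} := by
  ext t
  simp only [Set.mem_diff, Set.mem_singleton_iff]
  constructor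
  · rintro ⟨ht, hn⟩
    by_contra hne
    exact hn ⟨ht, hne⟩
  · rintro rfl
    exact ⟨hx, fun h => h.2 rfl⟩

lemma edirValid_induce_of {W : Set V} {a b : V} {e : EdgeDir}
    (h : edirValid G a b e) (ha : a ∈ W) (hb : b ∈ W) : edirValid (G.induce W) a b e := by
  cases e
  · exact ⟨h, ha, hb⟩
  · exact ⟨h, hb, ha⟩
  · exact ⟨h, ha, hb⟩

section WithH

variable [Fintype V] {x : V}

/-- The shortcut edge given by an inducing path relative to `{x}`. -/
lemma shortcut_edge (hG : G.IsMAG) (hx : x ∈ G.verts)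
    (H : G.project (G.verts \ {x}) = G.induce (G.verts \ {x}))
    {a b : V} (hA : InducingAdj G {x} a b)
    (ha : a ∈ G.verts) (hb : b ∈ G.verts) (hax : a ≠ x) (hbx : b ≠ x) (hab : a ≠ b) :
    ∃ e : EdgeDir, edirValid G a b e ∧ (bhd1 e = true ↔ ¬ G.anc a b) ∧
      (bhd2 e = true ↔ ¬ G.anc b a) := by
  have hW2 : G.verts \ (G.verts \ {x}) = {x} := W2_eq hx
  have hA' : InducingAdj G (G.verts \ (G.verts \ {x})) a b := by rw [hW2]; exact hA
  have haW : a ∈ G.verts \ {x} := ⟨ha, hax⟩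
  have hbW : b ∈ G.verts \ {x} := ⟨hb, hbx⟩
  by_cases hab1 : G.anc a b
  · have hnb : ¬ G.anc b a := hG.anc_antisymm hab hab1
    have hd : (G.project (G.verts \ {x})).dir a b := ⟨haW, hbW, hab, hA', hab1, hnb⟩
    rw [H] at hd
    exact ⟨.fwd, hd.1, by simp [bhd1, hab1], by simp [bhd2, hnb]⟩
  · by_cases hba : G.anc b a
    · have hd : (G.project (G.verts \ {x})).dir b a :=
        ⟨hbW, haW, hab.symm, Or.symm hA', hba, hab1⟩
      rw [H] at hd
      exact ⟨.bwd, hd.1, by simp [bhd1, hab1], by simp [bhd2, hba]⟩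
    · have hd : (G.project (G.verts \ {x})).bi a b := ⟨haW, hbW, hab, hA', hab1, hba⟩
      rw [H] at hd
      exact ⟨.bidir, hd.1, by simp [bhd1, hab1], by simp [bhd2, hba]⟩

/-- Shortcut for a directed path through `x`. -/
lemma shortcut_dir (hG : G.IsMAG) (hx : x ∈ G.verts)
    (H : G.project (G.verts \ {x}) = G.induce (G.verts \ {x}))
    {a b : V} (h1 : G.dir a x) (h2 : G.dir x b) : G.dir a b := by
  have hax : a ≠ x := fun h => hG.no_self_dir x (h ▸ h1)
  have hbx : b ≠ x := fun h => hG.no_self_dir x (h ▸ h2)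
  have hab : a ≠ b := by
    rintro rfl
    exact hG.no_dir_cycle a x h1 (G.dir_anc h2)
  have hxb : x ≠ b := fun h => hbx h.symm
  let p2 := mkPath2 .fwd .fwd h1 h2 hax hxb hab
  have hind : p2.isInducing {x} := by
    intro i h0 h2'
    have hi1 : i = 1 := by
      have : p2.len = 2 := rfl
      omega
    subst hi1
    constructor
    · rintro ⟨-, hh⟩
      have : p2.edir 1 = .fwd := rfl
      rw [this] at hh
      rcases hh with h | h <;> simp at h
    · intro _
      show p2.vert 1 ∈ ({x} : Set V)
      simp [p2, mkPath2]
  obtain ⟨e, hv, he1, -⟩ := shortcut_edge hG hx H (Or.inl ⟨p2, hind⟩) (G.dir_mem h1).1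
    (G.dir_mem h2).2 hax hbx hab
  have hanc : G.anc a b := (G.dir_anc h1).trans (G.dir_anc h2)
  have hf : bhd1 e = false := by
    cases hh : bhd1 e
    · rfl
    · exact absurd ((he1).mp hh hanc) (fun h => h)
  have : e = .fwd := bhd1_eq_false.mp hf
  subst this
  exact hv

/-- Ancestor relation transfers into the induced subgraph. -/
lemma anc_transfer (hG : G.IsMAG) (hx : x ∈ G.verts)
    (H : G.project (G.verts \ {x}) = G.induce (G.verts \ {x})) {b : V} (hbx : b ≠ x) :
    ∀ a : V, G.anc a b → a ≠ x → (G.induce (G.verts \ {x})).anc a b := by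
  intro a
  refine hG.wf_desc.induction
    (C := fun a => G.anc a b → a ≠ x → (G.induce (G.verts \ {x})).anc a b) a ?_
  intro a IH hab hax
  rcases hab.cases_head with rfl | ⟨c, hac, hcb⟩
  · exact Relation.ReflTransGen.refl
  · by_cases hcx : c = x
    · rw [hcx] at hac hcb
      rcases hcb.cases_head with h | ⟨d, hcd, hdb⟩
      · exact absurd h.symm hbx
      · have hdx : d ≠ x := fun h => hG.no_self_dir x (h ▸ hcd)
        have hda : G.dir a d := shortcut_dir hG hx H hac hcd
        have hstep : (G.induce (G.verts \ {x})).dir a d :=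
          ⟨hda, ⟨(G.dir_mem hda).1, hax⟩, (G.dir_mem hda).2, hdx⟩
        exact Relation.ReflTransGen.head hstep
          (IH d (Relation.TransGen.head hac (Relation.TransGen.single hcd)) hdb hdx)
    · have hstep : (G.induce (G.verts \ {x})).dir a c :=
        ⟨hac, ⟨(G.dir_mem hac).1, hax⟩, (G.dir_mem hac).2, hcx⟩
      exact Relation.ReflTransGen.head hstep (IH c (Relation.TransGen.single hac) hcb hcx)

/-- Transfer of open walks avoiding `x` into the induced subgraph. -/
lemma ow_to_induce (hG : G.IsMAG) (hx : x ∈ G.verts)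
    (H : G.project (G.verts \ {x}) = G.induce (G.verts \ {x}))
    {Z T : Set V} {z : V} (hTx : ∀ t ∈ T, t ≠ x) :
    ∀ (s : List (EdgeDir × V)) (v : V) (h : Bool), v ≠ x → (∀ q ∈ s, q.2 ≠ x) →
    ow G Z T z v h s → ow (G.induce (G.verts \ {x})) Z T z v h s := by
  intro s
  induction s with
  | nil => intro v h _ _ hw; exact hw
  | cons a t ih =>
      intro v h hvx hsx hw
      obtain ⟨e, w⟩ := a
      obtain ⟨hval, hcnd, hrest⟩ := hw
      have hwx : w ≠ x := hsx (e, w) (by simp)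
      refine ⟨edirValid_induce_of hval ⟨(edir_mem hval).1, hvx⟩ ⟨(edir_mem hval).2, hwx⟩,
        ⟨?_, hcnd.2⟩, ih w (bhd2 e) hwx (fun q hq => hsx q (by simp [hq])) hrest⟩
      intro htrue
      obtain ⟨t', ht', hanc⟩ := hcnd.1 htrue
      exact ⟨t', ht', anc_transfer hG hx H (hTx t' ht') v hanc hvx⟩

end WithH


/-! #### Direction 2: removability implies `project = induce` -/

lemma MixedGraph.ext' {G1 G2 : MixedGraph V} (h1 : G1.verts = G2.verts)
    (h2 : G1.dir = G2.dir) (h3 : G1.bi = G2.bi) : G1 = G2 := by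
  cases G1; cases G2
  cases h1; cases h2; cases h3
  rfl

lemma adj_symm' {G : MixedGraph V} {a b : V} (h : G.adj a b) : G.adj b a := by
  rcases h with h | h | h
  · exact Or.inr (Or.inl h)
  · exact Or.inl h
  · exact Or.inr (Or.inr (G.bi_symm h))

lemma inducing_not_blocked {G : MixedGraph V} {a b x : V} (p : MPath G a b)
    (hind : p.isInducing {x}) {Z : Set V} (hxZ : x ∉ Z) : ¬ p.blocked Z := by
  rintro ⟨i, h0, hl, hc⟩
  obtain ⟨hcoll, hncoll⟩ := hind i h0 hl
  rcases hc with ⟨hcol, hno⟩ | ⟨hncol, hinZ⟩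
  · rcases hcoll hcol with h | h
    · exact hno a (Or.inr (by simp)) h
    · exact hno b (Or.inr (by simp)) h
  · have hxi : p.vert i = x := hncoll hncol
    exact hxZ (hxi ▸ hinZ)

section Dir2

variable [Fintype V] {x : V}

lemma adjacent_of_inducingAdj (hG : G.IsMAG) (hrem : G.Removable x) {a b : V}
    (ha : a ∈ G.verts) (hb : b ∈ G.verts) (hax : a ≠ x) (hbx : b ≠ x) (hab : a ≠ b)
    (hA : InducingAdj G {x} a b) : G.adj a b := by
  by_contra hnadj
  have key : ∀ (u v : V), u ∈ G.verts → v ∈ G.verts → u ≠ x → v ≠ x → u ≠ v → ¬ G.adj u v →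
      ∀ p : MPath G u v, p.isInducing {x} → False := by
    intro u v hu hv hux hvx huv hnadj p hind
    obtain ⟨Z₀, hZ₀, hsep⟩ := hG.maximal u hu v hv huv hnadj
    have hsep' := mSep_induce_diff (x := x) hsep
    have hZ' : Z₀ \ {x} ⊆ G.verts \ {x, u, v} := by
      intro t ht
      have h2 := hZ₀ ht.1
      refine ⟨h2.1, ?_⟩
      have htx : t ≠ x := ht.2
      have : t ∉ ({u, v} : Set V) := h2.2
      simp only [Set.mem_insert_iff, Set.mem_singleton_iff] at this ⊢
      tauto
    have hms := (hrem u v hu hv hux hvx huv _ hZ').mpr hsep'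
    exact (inducing_not_blocked p hind (fun h => h.2 rfl)) (hms p)
  rcases hA with ⟨p, hind⟩ | ⟨q, hind⟩
  · exact key a b ha hb hax hbx hab hnadj p hind
  · exact key b a hb ha hbx hax hab.symm (fun h => hnadj (adj_symm' h)) q hind

lemma project_eq_induce_of_removable (hG : G.IsMAG) (hx : x ∈ G.verts)
    (hrem : G.Removable x) :
    G.project (G.verts \ {x}) = G.induce (G.verts \ {x}) := by
  have hW2 : G.verts \ (G.verts \ {x}) = {x} := W2_eq hx
  apply MixedGraph.ext'
  · show G.verts \ {x} = G.verts ∩ (G.verts \ {x})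
    exact (Set.inter_eq_right.mpr Set.diff_subset).symm
  · funext a b
    apply propext
    constructor
    · rintro ⟨haW, hbW, hab, hIA, hanc, hnanc⟩
      rw [hW2] at hIA
      have hadj := adjacent_of_inducingAdj hG hrem haW.1 hbW.1
        (fun h => haW.2 (by simp [h])) (fun h => hbW.2 (by simp [h])) hab hIA
      rcases hadj with hd | hd | hd
      · exact ⟨hd, haW, hbW⟩
      · exact absurd (G.dir_anc hd) hnanc
      · exact absurd hanc (hG.no_almost_dir_cycle b a (G.bi_symm hd))
    · rintro ⟨hd, haW, hbW⟩
      have hab : a ≠ b := by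
        rintro rfl
        exact hG.no_self_dir a hd
      refine ⟨haW, hbW, hab, ?_, G.dir_anc hd, hG.anc_antisymm hab (G.dir_anc hd)⟩
      rw [hW2]
      refine Or.inl ⟨mkPath1 .fwd hd hab, ?_⟩
      intro i h0 h1
      have hl : (mkPath1 (G := G) .fwd hd hab).len = 1 := rfl
      omega
  · funext a b
    apply propext
    constructor
    · rintro ⟨haW, hbW, hab, hIA, hna, hnb⟩
      rw [hW2] at hIA
      have hadj := adjacent_of_inducingAdj hG hrem haW.1 hbW.1
        (fun h => haW.2 (by simp [h])) (fun h => hbW.2 (by simp [h])) hab hIA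
      rcases hadj with hd | hd | hd
      · exact absurd (G.dir_anc hd) hna
      · exact absurd (G.dir_anc hd) hnb
      · exact ⟨hd, haW, hbW⟩
    · rintro ⟨hb', haW, hbW⟩
      have hab : a ≠ b := by
        rintro rfl
        exact hG.no_self_bi a hb'
      refine ⟨haW, hbW, hab, ?_, hG.no_almost_dir_cycle b a (G.bi_symm hb'),
        hG.no_almost_dir_cycle a b hb'⟩
      rw [hW2]
      refine Or.inl ⟨mkPath1 .bidir hb' hab, ?_⟩
      intro i h0 h1
      have hl : (mkPath1 (G := G) .bidir hb' hab).len = 1 := rfl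
      omega

end Dir2


/-! #### Path segments and extensions -/

def MPath.segment {G : MixedGraph V} {y z : V} (p : MPath G y z) (l r : ℕ) (hlr : l < r)
    (hr : r ≤ p.len) : MPath G (p.vert l) (p.vert r) where
  len := r - l
  len_pos := by omega
  vert := fun i => p.vert (l + i)
  edir := fun i => p.edir (l + i)
  first := by simp
  last := congrArg p.vert (by omega)
  mem := fun i hi => p.mem (l + i) (by omega)
  inj := by
    intro i j hi hj hij
    have := p.inj (l + i) (l + j) (by omega) (by omega) hij
    omega
  valid := fun i hi => p.valid (l + i) (by omega)

lemma segment_collider_iff {G : MixedGraph V} {y z : V} (p : MPath G y z) (l r : ℕ)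
    (hlr : l < r) (hr : r ≤ p.len) (i : ℕ) (h0 : 0 < i) :
    (p.segment l r hlr hr).collider i ↔ p.collider (l + i) := by
  unfold MPath.collider
  have h1 : (p.segment l r hlr hr).edir (i-1) = p.edir (l + i - 1) := by
    show p.edir (l + (i-1)) = _
    congr 1
    omega
  have h2 : (p.segment l r hlr hr).edir i = p.edir (l + i) := rfl
  rw [h1, h2]

def MPath.snocP {G : MixedGraph V} {a c : V} (p : MPath G a c) {b : V} (e : EdgeDir)
    (hv : edirValid G c b e) (hnotin : ∀ i, i ≤ p.len → p.vert i ≠ b) : MPath G a b where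
  len := p.len + 1
  len_pos := by omega
  vert := fun i => if i ≤ p.len then p.vert i else b
  edir := fun i => if i < p.len then p.edir i else e
  first := by simp [p.first]
  last := by simp
  mem := by
    intro i hi
    by_cases h : i ≤ p.len
    · simp only [if_pos h]
      exact p.mem i h
    · simp only [if_neg h]
      exact (edir_mem hv).2
  inj := by
    intro i j hi hj hij
    by_cases h1 : i ≤ p.len <;> by_cases h2 : j ≤ p.len
    · simp only [if_pos h1, if_pos h2] at hij
      exact p.inj i j h1 h2 hij
    · simp only [if_pos h1, if_neg h2] at hij
      exact absurd hij (hnotin i h1)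
    · simp only [if_neg h1, if_pos h2] at hij
      exact absurd hij.symm (hnotin j h2)
    · omega
  valid := by
    intro i hi
    by_cases h : i < p.len
    · simp only [if_pos h, if_pos (show i ≤ p.len by omega), if_pos (show i + 1 ≤ p.len by omega)]
      exact p.valid i h
    · have hieq : i = p.len := by omega
      simp only [if_neg h, if_pos (show i ≤ p.len by omega), if_neg (show ¬ i + 1 ≤ p.len by omega)]
      rw [hieq, p.last]
      exact hv

def MPath.consP {G : MixedGraph V} {c b : V} (p : MPath G c b) {a : V} (e : EdgeDir)
    (hv : edirValid G a c e) (hnotin : ∀ i, i ≤ p.len → p.vert i ≠ a) : MPath G a b where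
  len := p.len + 1
  len_pos := by omega
  vert := fun i => if i = 0 then a else p.vert (i - 1)
  edir := fun i => if i = 0 then e else p.edir (i - 1)
  first := by simp
  last := by
    simp only [if_neg (show ¬ p.len + 1 = 0 by omega)]
    rw [show p.len + 1 - 1 = p.len by omega]
    exact p.last
  mem := by
    intro i hi
    by_cases h : i = 0
    · simp only [if_pos h]
      exact (edir_mem hv).1
    · simp only [if_neg h]
      exact p.mem (i - 1) (by omega)
  inj := by
    intro i j hi hj hij
    by_cases h1 : i = 0 <;> by_cases h2 : j = 0
    · omega
    · simp only [if_pos h1, if_neg h2] at hij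
      exact absurd hij.symm (hnotin (j-1) (by omega))
    · simp only [if_neg h1, if_pos h2] at hij
      exact absurd hij (hnotin (i-1) (by omega))
    · simp only [if_neg h1, if_neg h2] at hij
      have := p.inj (i-1) (j-1) (by omega) (by omega) hij
      omega
  valid := by
    intro i hi
    by_cases h : i = 0
    · subst h
      simp only [if_pos rfl, if_neg (show ¬ (0:ℕ) + 1 = 0 by omega)]
      rw [show (0:ℕ) + 1 - 1 = 0 by omega, p.first]
      exact hv
    · simp only [if_neg h, if_neg (show ¬ i + 1 = 0 by omega)]
      rw [show i + 1 - 1 = i - 1 + 1 by omega]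
      exact p.valid (i-1) (by omega)

lemma pstep_ne_x {G : MixedGraph V} {y z x : V} {p : MPath G y z} {k l : ℕ}
    (hk : p.vert k = x) (hkl : k < p.len) (hlk : l < k) :
    ∀ q ∈ pstep p l, q.2 ≠ x := by
  intro q hq
  simp only [pstep, List.mem_map, List.mem_range] at hq
  obtain ⟨i, hi, rfl⟩ := hq
  intro hx2
  have hx2' : p.vert (i+1) = x := hx2
  have := p.inj (i+1) k (by omega) (by omega) (by rw [hx2', hk])
  omega

lemma sufstep_ne_x {G : MixedGraph V} {y z x : V} {p : MPath G y z} {k r : ℕ}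
    (hk : p.vert k = x) (hkr : k ≤ r) :
    ∀ q ∈ sufstep p r, q.2 ≠ x := by
  intro q hq
  simp only [sufstep, List.mem_map, List.mem_range] at hq
  obtain ⟨j, hj, rfl⟩ := hq
  intro hx2
  have hx2' : p.vert (r+j+1) = x := hx2
  have := p.inj (r+j+1) k (by omega) (by omega) (by rw [hx2', hk])
  omega

lemma vert_ne_of_ne {G : MixedGraph V} {y z : V} {p : MPath G y z} {i j : ℕ}
    (hi : i ≤ p.len) (hj : j ≤ p.len) (hij : i ≠ j) : p.vert i ≠ p.vert j :=
  fun hv => hij (p.inj i j hi hj hv)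


/-! #### Main surgery: `x` a non-collider on the path -/

section MainSurgery

variable [Fintype V] {x y z : V} {Z T : Set V} {p : MPath G y z} {k : ℕ}

/-- There is an `x`-free open walk from `y` to `z`. -/
def GoodWalk (G : MixedGraph V) (Z T : Set V) (x y z : V) : Prop :=
  ∃ s, ow G Z T z y false s ∧ ∀ q ∈ s, q.2 ≠ x

lemma main_nc (hG : G.IsMAG) (hx : x ∈ G.verts)
    (H : G.project (G.verts \ {x}) = G.induce (G.verts \ {x}))
    (hT : T = Z ∪ {y, z}) (hnb : ¬ p.blocked Z) (hyZ : y ∉ Z)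
    (hk : p.vert k = x) (hk0 : 0 < k) (hkl : k < p.len)
    (hxnc : ¬ p.collider k) :
    ∀ (μ l r : ℕ), l + (p.len - r) ≤ μ → l < k → k < r → r ≤ p.len →
    (∀ i, l < i → i < r → i ≠ k → p.collider i ∧
      (G.anc (p.vert i) (p.vert l) ∨ G.anc (p.vert i) (p.vert r))) →
    GoodWalk G Z T x y z := by
  intro μ
  induction μ using Nat.strong_induction_on with
  | _ μ IH =>
  intro l r hμ hlk hkr hrlen hINV
  have hvlx : p.vert l ≠ x := by
    intro h
    have := p.inj l k (by omega) (by omega) (by rw [h, hk])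
    omega
  have hvrx : p.vert r ≠ x := by
    intro h
    have := p.inj r k (by omega) (by omega) (by rw [h, hk])
    omega
  have hvlr : p.vert l ≠ p.vert r := vert_ne_of_ne (by omega) (by omega) (by omega)
  have hindu : (p.segment l r (hlk.trans hkr) hrlen).isInducing {x} := by
    intro i h0 hi
    have hilen : i < r - l := hi
    by_cases hik : l + i = k
    · constructor
      · intro hcol
        exact absurd ((segment_collider_iff p l r _ _ i h0).mp hcol) (by rw [hik]; exact hxnc)
      · intro _
        show p.vert (l + i) ∈ ({x} : Set V)
        rw [hik, hk]
        rfl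
    · obtain ⟨hc, hor⟩ := hINV (l+i) (by omega) (by omega) hik
      constructor
      · intro _
        exact hor
      · intro hnc
        exact absurd ((segment_collider_iff p l r _ _ i h0).mpr hc) hnc
  obtain ⟨e, hval, he1, he2⟩ := shortcut_edge hG hx H
    (Or.inl ⟨p.segment l r (hlk.trans hkr) hrlen, hindu⟩)
    (p.mem l (by omega)) (p.mem r (by omega)) hvlx hvrx hvlr
  by_cases hbadL : 0 < l ∧ bhd2 (p.edir (l-1)) = true ∧ bhd1 (p.edir l) = true ∧
      bhd1 e = false ∧ p.vert l ∈ Z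
  · obtain ⟨hl0, hm', hol, hef, hZl⟩ := hbadL
    have hancl : G.anc (p.vert l) (p.vert r) := by
      by_contra hno
      rw [he1.mpr hno] at hef
      exact absurd hef (by simp)
    refine IH (μ - 1) (by omega) (l-1) r (by omega) (by omega) hkr hrlen ?_
    intro i hi1 hi2 hik
    by_cases hil : i = l
    · subst hil
      exact ⟨⟨(bhd2_iff _).mp hm', (bhd1_iff _).mp hol⟩, Or.inr hancl⟩
    · obtain ⟨hc, hor⟩ := hINV i (by omega) hi2 hik
      refine ⟨hc, Or.inr ?_⟩
      rcases hor with hh | hh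
      · exact hh.trans hancl
      · exact hh
  by_cases hbadR : r < p.len ∧ bhd1 (p.edir r) = true ∧ bhd2 (p.edir (r-1)) = true ∧
      bhd2 e = false ∧ p.vert r ∈ Z
  · obtain ⟨hrl, hor', hmr, hef, hZr⟩ := hbadR
    have hancr : G.anc (p.vert r) (p.vert l) := by
      by_contra hno
      rw [he2.mpr hno] at hef
      exact absurd hef (by simp)
    refine IH (μ - 1) (by omega) l (r+1) (by omega) hlk (by omega) (by omega) ?_
    intro i hi1 hi2 hik
    by_cases hir : i = r
    · subst hir
      exact ⟨⟨(bhd2_iff _).mp hmr, (bhd1_iff _).mp hor'⟩, Or.inl hancr⟩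
    · obtain ⟨hc, hor⟩ := hINV i hi1 (by omega) hik
      refine ⟨hc, ?_⟩
      rcases hor with hh | hh
      · exact Or.inl hh
      · exact Or.inl (hh.trans hancr)
  have hcondL : wcond G Z T (p.vert l) (pmark p l && bhd1 e) := by
    constructor
    · intro htrue
      rw [Bool.and_eq_true] at htrue
      obtain ⟨hm, ho⟩ := htrue
      have hl0 : ¬ l = 0 := by
        intro h
        rw [h] at hm
        simp [pmark] at hm
      have hm' : bhd2 (p.edir (l-1)) = true := by
        rw [pmark, if_neg hl0] at hm; exact hm
      by_cases hcl : bhd1 (p.edir l) = true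
      · exact (mpath_cond hT hnb l (by omega) (by omega)).1 (by rw [hm', hcl]; rfl)
      · exfalso
        have hfwd : p.edir l = .fwd := bhd1_eq_false.mp (by simpa using hcl)
        have hdir : G.dir (p.vert l) (p.vert (l+1)) := by
          have hv := p.valid l (by omega)
          rw [hfwd] at hv
          exact hv
        have hnal : ¬ G.anc (p.vert l) (p.vert r) := he1.mp ho
        by_cases hlk1 : l + 1 = k
        · have hdx : G.dir (p.vert l) x := by rw [← hk, ← hlk1]; exact hdir
          have hh2 : headAt2 (p.edir (k-1)) := by
            rw [show k - 1 = l by omega, hfwd]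
            exact Or.inl rfl
          have hkfwd : p.edir k = .fwd := by
            rcases hek : p.edir k with _ | _ | _
            · rfl
            · exact absurd ⟨hh2, by rw [hek]; exact Or.inl rfl⟩ hxnc
            · exact absurd ⟨hh2, by rw [hek]; exact Or.inr rfl⟩ hxnc
          have hdx2 : G.dir x (p.vert (k+1)) := by
            have hv := p.valid k (by omega)
            rw [hkfwd, hk] at hv
            exact hv
          have hanck : G.anc (p.vert l) (p.vert (k+1)) := (G.dir_anc hdx).trans (G.dir_anc hdx2)
          by_cases hk1r : k + 1 = r
          · exact hnal (by rw [← hk1r]; exact hanck)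
          · obtain ⟨-, hor⟩ := hINV (k+1) (by omega) (by omega) (by omega)
            rcases hor with hh | hh
            · exact hG.anc_antisymm (vert_ne_of_ne (by omega) (by omega) (by omega)) hanck hh
            · exact hnal (hanck.trans hh)
        · obtain ⟨-, hor⟩ := hINV (l+1) (by omega) (by omega) hlk1
          rcases hor with hh | hh
          · exact hG.anc_antisymm (vert_ne_of_ne (by omega) (by omega) (by omega))
              (G.dir_anc hdir) hh
          · exact hnal ((G.dir_anc hdir).trans hh)
    · intro hfalse hZl
      by_cases hm : pmark p l = true
      · have hl0 : ¬ l = 0 := by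
          intro h
          rw [h] at hm
          simp [pmark] at hm
        have hm' : bhd2 (p.edir (l-1)) = true := by rw [pmark, if_neg hl0] at hm; exact hm
        by_cases hcl : bhd1 (p.edir l) = true
        · have hef : bhd1 e = false := by
            rw [hm] at hfalse
            simpa using hfalse
          exact hbadL ⟨by omega, hm', hcl, hef, hZl⟩
        · have hcl' : bhd1 (p.edir l) = false := by simpa using hcl
          exact (mpath_cond hT hnb l (by omega) (by omega)).2 (by rw [hcl']; simp) hZl
      · have hm0 : pmark p l = false := by simpa using hm
        by_cases hl0 : l = 0
        · subst hl0
          rw [p.first] at hZl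
          exact hyZ hZl
        · have hm2 : bhd2 (p.edir (l-1)) = false := by rw [pmark, if_neg hl0] at hm0; exact hm0
          exact (mpath_cond hT hnb l (by omega) (by omega)).2 (by rw [hm2]; rfl) hZl
  have hcondR : r < p.len → wcond G Z T (p.vert r) (bhd2 e && bhd1 (p.edir r)) := by
    intro hrlt
    constructor
    · intro htrue
      rw [Bool.and_eq_true] at htrue
      obtain ⟨hm2, ho2⟩ := htrue
      by_cases hcr : bhd2 (p.edir (r-1)) = true
      · exact (mpath_cond hT hnb r (by omega) hrlt).1 (by rw [hcr, ho2]; rfl)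
      · exfalso
        have hbwd : p.edir (r-1) = .bwd := bhd2_eq_false.mp (by simpa using hcr)
        have hdir : G.dir (p.vert r) (p.vert (r-1)) := by
          have hv := p.valid (r-1) (by omega)
          rw [hbwd] at hv
          rw [show r - 1 + 1 = r by omega] at hv
          exact hv
        have hnar : ¬ G.anc (p.vert r) (p.vert l) := he2.mp hm2
        by_cases hrk1 : r - 1 = k
        · have hdx : G.dir (p.vert r) x := by rw [← hk, ← hrk1]; exact hdir
          have hh1 : headAt1 (p.edir k) := by
            rw [show k = r - 1 by omega, hbwd]
            exact Or.inl rfl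
          have hkbwd : p.edir (k-1) = .bwd := by
            rcases hek : p.edir (k-1) with _ | _ | _
            · exact absurd ⟨by rw [hek]; exact Or.inl rfl, hh1⟩ hxnc
            · rfl
            · exact absurd ⟨by rw [hek]; exact Or.inr rfl, hh1⟩ hxnc
          have hdx2 : G.dir x (p.vert (k-1)) := by
            have hv := p.valid (k-1) (by omega)
            rw [hkbwd] at hv
            rw [show k - 1 + 1 = k by omega, hk] at hv
            exact hv
          have hanck : G.anc (p.vert r) (p.vert (k-1)) := (G.dir_anc hdx).trans (G.dir_anc hdx2)
          by_cases hklr : k - 1 = l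
          · exact hnar (by rw [← hklr]; exact hanck)
          · obtain ⟨-, hor⟩ := hINV (k-1) (by omega) (by omega) (by omega)
            rcases hor with hh | hh
            · exact hnar (hanck.trans hh)
            · exact hG.anc_antisymm (vert_ne_of_ne (by omega) (by omega) (by omega)) hanck hh
        · obtain ⟨-, hor⟩ := hINV (r-1) (by omega) (by omega) hrk1
          rcases hor with hh | hh
          · exact hnar ((G.dir_anc hdir).trans hh)
          · exact hG.anc_antisymm (vert_ne_of_ne (by omega) (by omega) (by omega))
              (G.dir_anc hdir) hh
    · intro hfalse hZr
      by_cases ho2 : bhd1 (p.edir r) = true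
      · by_cases hm2 : bhd2 e = true
        · rw [hm2, ho2] at hfalse
          simp at hfalse
        · have hm2' : bhd2 e = false := by simpa using hm2
          by_cases hcr : bhd2 (p.edir (r-1)) = true
          · exact hbadR ⟨hrlt, ho2, hcr, hm2', hZr⟩
          · have hcr' : bhd2 (p.edir (r-1)) = false := by simpa using hcr
            exact (mpath_cond hT hnb r (by omega) hrlt).2 (by rw [hcr']; rfl) hZr
      · have ho2' : bhd1 (p.edir r) = false := by simpa using ho2
        exact (mpath_cond hT hnb r (by omega) hrlt).2 (by rw [ho2']; simp) hZr
  refine ⟨pstep p l ++ (e, p.vert r) :: sufstep p r, ?_, ?_⟩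
  · refine ow_of_owT _ (mpath_prefix hT hnb hyZ l (by omega)) ⟨hval, hcondL, ?_⟩
    exact mpath_suffix hT hnb (p.len - r) r rfl (by omega) (bhd2 e) hcondR
  · intro q hq
    rcases List.mem_append.mp hq with hq1 | hq1
    · exact pstep_ne_x hk hkl hlk q hq1
    · rcases List.mem_cons.mp hq1 with rfl | hq2
      · exact hvrx
      · exact sufstep_ne_x hk (by omega) q hq2


lemma beta_left (hG : G.IsMAG) {p : MPath G y z} {k l : ℕ} {d : V}
    (hk : p.vert k = x) (hxd : G.dir x d) (hlk : l < k) (hkl : k < p.len)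
    (hxcol2 : headAt2 (p.edir (k-1)))
    (hINV : ∀ i, l < i → i < k → p.collider i ∧ G.anc (p.vert i) d) :
    ¬ G.anc d (p.vert l) := by
  intro had
  have hhead : headAt2 (p.edir l) ∧ G.anc (p.vert (l+1)) (p.vert l) := by
    by_cases h1 : l + 1 = k
    · refine ⟨?_, ?_⟩
      · rw [show l = k - 1 by omega]
        exact hxcol2
      · rw [h1, hk]
        exact (G.dir_anc hxd).trans had
    · obtain ⟨hc, hanc⟩ := hINV (l+1) (by omega) (by omega)
      exact ⟨hc.1, hanc.trans had⟩
  obtain ⟨hh, hanc1⟩ := hhead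
  have hv := p.valid l (by omega)
  rcases hel : p.edir l with _|_|_
  · rw [hel] at hv
    exact hG.no_dir_cycle _ _ hv hanc1
  · rw [hel] at hh
    rcases hh with h|h <;> simp at h
  · rw [hel] at hv
    exact hG.no_almost_dir_cycle _ _ hv hanc1

lemma beta_right (hG : G.IsMAG) {p : MPath G y z} {k r : ℕ} {d : V}
    (hk : p.vert k = x) (hxd : G.dir x d) (hkr : k < r) (hrl : r ≤ p.len)
    (hxcol1 : headAt1 (p.edir k))
    (hINV : ∀ i, k < i → i < r → p.collider i ∧ G.anc (p.vert i) d) :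
    ¬ G.anc d (p.vert r) := by
  intro had
  have hhead : headAt1 (p.edir (r-1)) ∧ G.anc (p.vert (r-1)) (p.vert r) := by
    by_cases h1 : r - 1 = k
    · refine ⟨?_, ?_⟩
      · rw [h1]
        exact hxcol1
      · rw [h1, hk]
        exact (G.dir_anc hxd).trans had
    · obtain ⟨hc, hanc⟩ := hINV (r-1) (by omega) (by omega)
      exact ⟨hc.2, hanc.trans had⟩
  obtain ⟨hh, hanc1⟩ := hhead
  have hv := p.valid (r-1) (by omega)
  rw [show r - 1 + 1 = r by omega] at hv
  rcases hel : p.edir (r-1) with _|_|_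
  · rw [hel] at hh
    rcases hh with h|h <;> simp at h
  · rw [hel] at hv
    exact hG.no_dir_cycle _ _ hv hanc1
  · rw [hel] at hv
    exact hG.no_almost_dir_cycle _ _ (G.bi_symm hv) hanc1


lemma main_cz (hG : G.IsMAG) (hx : x ∈ G.verts)
    (H : G.project (G.verts \ {x}) = G.induce (G.verts \ {x}))
    (hT : T = Z ∪ {y, z}) (hnb : ¬ p.blocked Z) (hyZ : y ∉ Z)
    (hk : p.vert k = x) (hk0 : 0 < k) (hkl : k < p.len)
    {d : V} (hdxd : G.dir x d) {vs : List V} (hch : DChain G Z d vs z) :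
    ∀ (μ l : ℕ), l ≤ μ → l < k →
    (∀ i, l < i → i < k → p.collider i ∧ G.anc (p.vert i) d) →
    GoodWalk G Z T x y z := by
  have hdx : d ≠ x := fun h => hG.no_self_dir x (h ▸ hdxd)
  have hvsx : ∀ c ∈ vs, c ≠ x :=
    fun c hc h => hG.no_dir_cycle x d hdxd (h ▸ dchain_mem_anc _ _ _ hch c hc)
  intro μ
  induction μ using Nat.strong_induction_on with
  | _ μ IH =>
  intro l hμ hlk hINV
  by_cases hdon : ∃ j, l ≤ j ∧ j < k ∧ p.vert j = d
  · obtain ⟨j, hjl, hjk, hjd⟩ := hdon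
    have hdZ : d ∉ Z := by
      cases vs with
      | nil =>
          obtain rfl : d = z := hch
          exfalso
          have := p.inj j p.len (by omega) (le_refl _) (by rw [hjd, p.last])
          omega
      | cons c vs' => exact hch.2.1
    refine ⟨pstep p j ++ vs.map (fun c => (EdgeDir.fwd, c)), ?_, ?_⟩
    · refine ow_of_owT _ (mpath_prefix hT hnb hyZ j (by omega)) ?_
      rw [hjd]
      exact downz _ _ hch _
    · intro q hq
      rcases List.mem_append.mp hq with h1 | h1
      · exact pstep_ne_x hk hkl (by omega) q h1
      · simp only [List.mem_map] at h1
        obtain ⟨c, hc, rfl⟩ := h1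
        exact hvsx c hc
  · push_neg at hdon
    have hnotin : ∀ i, i ≤ (p.segment l k hlk (by omega)).len →
        (p.segment l k hlk (by omega)).vert i ≠ d := by
      intro i hi
      show p.vert (l + i) ≠ d
      have hilen : i ≤ k - l := hi
      by_cases hik : l + i = k
      · rw [hik, hk]
        exact fun h => hdx h.symm
      · exact hdon (l+i) (by omega) (by omega)
    have hvx : edirValid G (p.vert k) d .fwd := by
      show G.dir (p.vert k) d
      rw [hk]
      exact hdxd
    set corr := (p.segment l k hlk (by omega)).snocP .fwd hvx hnotin with hcorr
    have hclen : corr.len = (k - l) + 1 := rfl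
    have hcvert : ∀ i, i ≤ k - l → corr.vert i = p.vert (l + i) := by
      intro i hi
      show (if i ≤ k - l then p.vert (l + i) else d) = p.vert (l + i)
      rw [if_pos hi]
    have hcedir : ∀ i, i < k - l → corr.edir i = p.edir (l + i) := by
      intro i hi
      show (if i < k - l then p.edir (l + i) else .fwd) = p.edir (l + i)
      rw [if_pos hi]
    have hcedir2 : corr.edir (k - l) = .fwd := by
      show (if k - l < k - l then p.edir (l + (k-l)) else .fwd) = .fwd
      rw [if_neg (by omega)]
    have hindu : corr.isInducing {x} := by
      intro i h0 hi
      rw [hclen] at hi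
      by_cases hik : i = k - l
      · constructor
        · rintro ⟨-, hh1⟩
          rw [hik, hcedir2] at hh1
          rcases hh1 with h|h <;> simp at h
        · intro _
          show corr.vert i ∈ ({x} : Set V)
          rw [hcvert i (by omega), show l + i = k by omega, hk]
          rfl
      · obtain ⟨hc, hanc⟩ := hINV (l+i) (by omega) (by omega)
        constructor
        · intro _
          right
          rw [hcvert i (by omega)]
          exact hanc
        · intro hnc
          exfalso
          apply hnc
          constructor
          · have he : corr.edir (i-1) = p.edir (l + i - 1) := by
              rw [hcedir (i-1) (by omega)]
              congr 1
              omega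
            rw [he]
            exact hc.1
          · rw [hcedir i (by omega)]
            exact hc.2
    have hvlx : p.vert l ≠ x := by
      intro h
      have := p.inj l k (by omega) (by omega) (by rw [h, hk])
      omega
    have hvld : p.vert l ≠ d := hdon l (le_refl _) hlk
    obtain ⟨e, hval, he1, he2⟩ := shortcut_edge hG hx H (Or.inl ⟨corr, hindu⟩)
      (p.mem l (by omega)) (G.dir_mem hdxd).2 hvlx hdx hvld
    by_cases hbadL : 0 < l ∧ bhd2 (p.edir (l-1)) = true ∧ bhd1 (p.edir l) = true ∧
        bhd1 e = false ∧ p.vert l ∈ Z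
    · obtain ⟨hl0, hm', hol, hef, hZl⟩ := hbadL
      have hancl : G.anc (p.vert l) d := by
        by_contra hno
        rw [he1.mpr hno] at hef
        exact absurd hef (by simp)
      refine IH (μ - 1) (by omega) (l-1) (by omega) (by omega) ?_
      intro i hi1 hi2
      by_cases hil : i = l
      · subst hil
        exact ⟨⟨(bhd2_iff _).mp hm', (bhd1_iff _).mp hol⟩, hancl⟩
      · exact hINV i (by omega) hi2
    · have hcondL : wcond G Z T (p.vert l) (pmark p l && bhd1 e) := by
        constructor
        · intro htrue
          rw [Bool.and_eq_true] at htrue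
          obtain ⟨hm, ho⟩ := htrue
          have hl0 : ¬ l = 0 := by
            intro h
            rw [h] at hm
            simp [pmark] at hm
          have hm' : bhd2 (p.edir (l-1)) = true := by rw [pmark, if_neg hl0] at hm; exact hm
          by_cases hcl : bhd1 (p.edir l) = true
          · exact (mpath_cond hT hnb l (by omega) (by omega)).1 (by rw [hm', hcl]; rfl)
          · exfalso
            have hfwd : p.edir l = .fwd := bhd1_eq_false.mp (by simpa using hcl)
            have hdir : G.dir (p.vert l) (p.vert (l+1)) := by
              have hv := p.valid l (by omega)
              rw [hfwd] at hv
              exact hv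
            have hnal : ¬ G.anc (p.vert l) d := he1.mp ho
            by_cases hlk1 : l + 1 = k
            · have hax : G.anc (p.vert l) x := by
                rw [← hk, ← hlk1]
                exact G.dir_anc hdir
              exact hnal (hax.trans (G.dir_anc hdxd))
            · obtain ⟨-, ha⟩ := hINV (l+1) (by omega) (by omega)
              exact hnal ((G.dir_anc hdir).trans ha)
        · intro hfalse hZl
          by_cases hm : pmark p l = true
          · have hl0 : ¬ l = 0 := by
              intro h
              rw [h] at hm
              simp [pmark] at hm
            have hm' : bhd2 (p.edir (l-1)) = true := by rw [pmark, if_neg hl0] at hm; exact hm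
            by_cases hcl : bhd1 (p.edir l) = true
            · have hef : bhd1 e = false := by
                rw [hm] at hfalse
                simpa using hfalse
              exact hbadL ⟨by omega, hm', hcl, hef, hZl⟩
            · have hcl' : bhd1 (p.edir l) = false := by simpa using hcl
              exact (mpath_cond hT hnb l (by omega) (by omega)).2 (by rw [hcl']; simp) hZl
          · have hm0 : pmark p l = false := by simpa using hm
            by_cases hl0 : l = 0
            · subst hl0
              rw [p.first] at hZl
              exact hyZ hZl
            · have hm2 : bhd2 (p.edir (l-1)) = false := by rw [pmark, if_neg hl0] at hm0; exact hm0
              exact (mpath_cond hT hnb l (by omega) (by omega)).2 (by rw [hm2]; rfl) hZl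
      refine ⟨pstep p l ++ (e, d) :: vs.map (fun c => (EdgeDir.fwd, c)), ?_, ?_⟩
      · refine ow_of_owT _ (mpath_prefix hT hnb hyZ l (by omega)) ⟨hval, hcondL, ?_⟩
        exact downz _ _ hch _
      · intro q hq
        rcases List.mem_append.mp hq with h1 | h1
        · exact pstep_ne_x hk hkl hlk q h1
        · rcases List.mem_cons.mp h1 with rfl | h2
          · exact hdx
          · simp only [List.mem_map] at h2
            obtain ⟨c, hc, rfl⟩ := h2
            exact hvsx c hc


lemma main_cy (hG : G.IsMAG) (hx : x ∈ G.verts)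
    (H : G.project (G.verts \ {x}) = G.induce (G.verts \ {x}))
    (hT : T = Z ∪ {y, z}) (hnb : ¬ p.blocked Z) (hyZ : y ∉ Z)
    (hk : p.vert k = x) (hk0 : 0 < k) (hkl : k < p.len)
    {d : V} (hdxd : G.dir x d) {vs : List V} (hch : DChain G Z d vs y) :
    ∀ (μ r : ℕ), p.len - r ≤ μ → k < r → r ≤ p.len →
    (∀ i, k < i → i < r → p.collider i ∧ G.anc (p.vert i) d) →
    GoodWalk G Z T x y z := by
  have hdx : d ≠ x := fun h => hG.no_self_dir x (h ▸ hdxd)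
  have hvsx : ∀ c ∈ vs, c ≠ x :=
    fun c hc h => hG.no_dir_cycle x d hdxd (h ▸ dchain_mem_anc _ _ _ hch c hc)
  have hdZ : d ∉ Z := by
    cases vs with
    | nil =>
        obtain rfl : d = y := hch
        exact hyZ
    | cons c vs' => exact hch.2.1
  intro μ
  induction μ using Nat.strong_induction_on with
  | _ μ IH =>
  intro r hμ hkr hrlen hINV
  by_cases hdon : ∃ j, k < j ∧ j ≤ r ∧ p.vert j = d
  · obtain ⟨j, hjk, hjr, hjd⟩ := hdon
    have hrest : ow G Z T z d false (sufstep p j) := by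
      rw [← hjd]
      refine mpath_suffix hT hnb (p.len - j) j rfl (by omega) false ?_
      intro _
      refine ⟨fun h => by simp at h, fun _ => ?_⟩
      rw [hjd]
      exact hdZ
    obtain ⟨ups, how, hsub⟩ := upy vs d y hch hyZ _ hrest
    refine ⟨ups ++ sufstep p j, how, ?_⟩
    intro q hq
    rcases List.mem_append.mp hq with h1 | h1
    · rcases hsub q h1 with h2 | h2
      · rw [h2]; exact hdx
      · exact hvsx _ h2
    · exact sufstep_ne_x hk (by omega) q h1
  · push_neg at hdon
    have hnotin : ∀ i, i ≤ (p.segment k r hkr hrlen).len →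
        (p.segment k r hkr hrlen).vert i ≠ d := by
      intro i hi
      show p.vert (k + i) ≠ d
      have hilen : i ≤ r - k := hi
      by_cases hik : i = 0
      · rw [hik]
        show p.vert (k + 0) ≠ d
        rw [show k + 0 = k from rfl, hk]
        exact fun h => hdx h.symm
      · exact hdon (k+i) (by omega) (by omega)
    have hvx : edirValid G d (p.vert k) .bwd := by
      show G.dir (p.vert k) d
      rw [hk]
      exact hdxd
    set corr := (p.segment k r hkr hrlen).consP .bwd hvx hnotin with hcorr
    have hclen : corr.len = (r - k) + 1 := rfl
    have hcvert : ∀ i, 0 < i → corr.vert i = p.vert (k + (i-1)) := by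
      intro i hi
      show (if i = 0 then d else p.vert (k + (i-1))) = p.vert (k + (i-1))
      rw [if_neg (by omega)]
    have hcedir : ∀ i, 0 < i → corr.edir i = p.edir (k + (i-1)) := by
      intro i hi
      show (if i = 0 then .bwd else p.edir (k + (i-1))) = p.edir (k + (i-1))
      rw [if_neg (by omega)]
    have hcedir0 : corr.edir 0 = .bwd := rfl
    have hindu : corr.isInducing {x} := by
      intro i h0 hi
      rw [hclen] at hi
      by_cases hik : i = 1
      · constructor
        · rintro ⟨hh2, -⟩
          rw [hik] at hh2
          rw [show (1:ℕ) - 1 = 0 from rfl, hcedir0] at hh2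
          rcases hh2 with h|h <;> simp at h
        · intro _
          show corr.vert i ∈ ({x} : Set V)
          rw [hcvert i h0, hik]
          show p.vert (k + 0) ∈ ({x} : Set V)
          rw [show k + 0 = k from rfl, hk]
          rfl
      · obtain ⟨hc, hanc⟩ := hINV (k+(i-1)) (by omega) (by omega)
        constructor
        · intro _
          left
          rw [hcvert i h0]
          exact hanc
        · intro hnc
          exfalso
          apply hnc
          constructor
          · have he : corr.edir (i-1) = p.edir (k + (i-1) - 1) := by
              rw [hcedir (i-1) (by omega)]
              congr 1
              omega
            rw [he]
            exact hc.1
          · rw [hcedir i h0]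
            exact hc.2
    have hvrx : p.vert r ≠ x := by
      intro h
      have := p.inj r k (by omega) (by omega) (by rw [h, hk])
      omega
    have hvrd : d ≠ p.vert r := fun h => hdon r (by omega) (le_refl _) h.symm
    obtain ⟨e, hval, he1, he2⟩ := shortcut_edge hG hx H (Or.inl ⟨corr, hindu⟩)
      (G.dir_mem hdxd).2 (p.mem r (by omega)) hdx hvrx hvrd
    by_cases hbadR : r < p.len ∧ bhd1 (p.edir r) = true ∧ bhd2 (p.edir (r-1)) = true ∧
        bhd2 e = false ∧ p.vert r ∈ Z
    · obtain ⟨hrl, hor', hmr, hef, hZr⟩ := hbadR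
      have hancr : G.anc (p.vert r) d := by
        by_contra hno
        rw [he2.mpr hno] at hef
        exact absurd hef (by simp)
      refine IH (μ - 1) (by omega) (r+1) (by omega) (by omega) (by omega) ?_
      intro i hi1 hi2
      by_cases hir : i = r
      · subst hir
        exact ⟨⟨(bhd2_iff _).mp hmr, (bhd1_iff _).mp hor'⟩, hancr⟩
      · exact hINV i hi1 (by omega)
    · have hcondR : r < p.len → wcond G Z T (p.vert r) (bhd2 e && bhd1 (p.edir r)) := by
        intro hrlt
        constructor
        · intro htrue
          rw [Bool.and_eq_true] at htrue
          obtain ⟨hm2, ho2⟩ := htrue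
          by_cases hcr : bhd2 (p.edir (r-1)) = true
          · exact (mpath_cond hT hnb r (by omega) hrlt).1 (by rw [hcr, ho2]; rfl)
          · exfalso
            have hbwd : p.edir (r-1) = .bwd := bhd2_eq_false.mp (by simpa using hcr)
            have hdir : G.dir (p.vert r) (p.vert (r-1)) := by
              have hv := p.valid (r-1) (by omega)
              rw [hbwd] at hv
              rw [show r - 1 + 1 = r by omega] at hv
              exact hv
            have hnar : ¬ G.anc (p.vert r) d := he2.mp hm2
            by_cases hrk1 : r - 1 = k
            · have hax : G.anc (p.vert r) x := by
                rw [← hk, ← hrk1]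
                exact G.dir_anc hdir
              exact hnar (hax.trans (G.dir_anc hdxd))
            · obtain ⟨-, ha⟩ := hINV (r-1) (by omega) (by omega)
              exact hnar ((G.dir_anc hdir).trans ha)
        · intro hfalse hZr
          by_cases ho2 : bhd1 (p.edir r) = true
          · by_cases hm2 : bhd2 e = true
            · rw [hm2, ho2] at hfalse
              simp at hfalse
            · have hm2' : bhd2 e = false := by simpa using hm2
              by_cases hcr : bhd2 (p.edir (r-1)) = true
              · exact hbadR ⟨hrlt, ho2, hcr, hm2', hZr⟩
              · have hcr' : bhd2 (p.edir (r-1)) = false := by simpa using hcr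
                exact (mpath_cond hT hnb r (by omega) hrlt).2 (by rw [hcr']; rfl) hZr
          · have ho2' : bhd1 (p.edir r) = false := by simpa using ho2
            exact (mpath_cond hT hnb r (by omega) hrlt).2 (by rw [ho2']; simp) hZr
      have hrest : ow G Z T z d false ((e, p.vert r) :: sufstep p r) :=
        ⟨hval, ⟨fun h => by simp at h, fun _ => hdZ⟩,
          mpath_suffix hT hnb (p.len - r) r rfl (by omega) (bhd2 e) hcondR⟩
      obtain ⟨ups, how, hsub⟩ := upy vs d y hch hyZ _ hrest
      refine ⟨ups ++ (e, p.vert r) :: sufstep p r, how, ?_⟩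
      intro q hq
      rcases List.mem_append.mp hq with h1 | h1
      · rcases hsub q h1 with h2 | h2
        · rw [h2]; exact hdx
        · exact hvsx _ h2
      · rcases List.mem_cons.mp h1 with rfl | h2
        · exact hvrx
        · exact sufstep_ne_x hk (by omega) q h2


lemma shortcut_left (hG : G.IsMAG) (hx : x ∈ G.verts)
    (H : G.project (G.verts \ {x}) = G.induce (G.verts \ {x}))
    (hk : p.vert k = x) (hkl : k < p.len)
    {d : V} (hdxd : G.dir x d) {l : ℕ} (hlk : l < k)
    (hINV2 : ∀ i, l < i → i < k → p.collider i ∧ G.anc (p.vert i) d)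
    (hdon : ∀ j, l ≤ j → j < k → p.vert j ≠ d) :
    ∃ e, edirValid G (p.vert l) d e ∧ (bhd1 e = true ↔ ¬ G.anc (p.vert l) d) ∧
      (bhd2 e = true ↔ ¬ G.anc d (p.vert l)) := by
  have hdx : d ≠ x := fun h => hG.no_self_dir x (h ▸ hdxd)
  have hnotin : ∀ i, i ≤ (p.segment l k hlk (by omega)).len →
      (p.segment l k hlk (by omega)).vert i ≠ d := by
    intro i hi
    show p.vert (l + i) ≠ d
    have hilen : i ≤ k - l := hi
    by_cases hik : l + i = k
    · rw [hik, hk]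
      exact fun h => hdx h.symm
    · exact hdon (l+i) (by omega) (by omega)
  have hvx : edirValid G (p.vert k) d .fwd := by
    show G.dir (p.vert k) d
    rw [hk]
    exact hdxd
  set corr := (p.segment l k hlk (by omega)).snocP .fwd hvx hnotin with hcorr
  have hclen : corr.len = (k - l) + 1 := rfl
  have hcvert : ∀ i, i ≤ k - l → corr.vert i = p.vert (l + i) := by
    intro i hi
    show (if i ≤ k - l then p.vert (l + i) else d) = p.vert (l + i)
    rw [if_pos hi]
  have hcedir : ∀ i, i < k - l → corr.edir i = p.edir (l + i) := by
    intro i hi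
    show (if i < k - l then p.edir (l + i) else .fwd) = p.edir (l + i)
    rw [if_pos hi]
  have hcedir2 : corr.edir (k - l) = .fwd := by
    show (if k - l < k - l then p.edir (l + (k-l)) else .fwd) = .fwd
    rw [if_neg (by omega)]
  have hindu : corr.isInducing {x} := by
    intro i h0 hi
    rw [hclen] at hi
    by_cases hik : i = k - l
    · constructor
      · rintro ⟨-, hh1⟩
        rw [hik, hcedir2] at hh1
        rcases hh1 with h|h <;> simp at h
      · intro _
        show corr.vert i ∈ ({x} : Set V)
        rw [hcvert i (by omega), show l + i = k by omega, hk]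
        rfl
    · obtain ⟨hc, hanc⟩ := hINV2 (l+i) (by omega) (by omega)
      constructor
      · intro _
        right
        rw [hcvert i (by omega)]
        exact hanc
      · intro hnc
        exfalso
        apply hnc
        constructor
        · have he : corr.edir (i-1) = p.edir (l + i - 1) := by
            rw [hcedir (i-1) (by omega)]
            congr 1
            omega
          rw [he]
          exact hc.1
        · rw [hcedir i (by omega)]
          exact hc.2
  have hvlx : p.vert l ≠ x := by
    intro h
    have := p.inj l k (by omega) (by omega) (by rw [h, hk])
    omega
  have hvld : p.vert l ≠ d := hdon l (le_refl _) hlk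
  exact shortcut_edge hG hx H (Or.inl ⟨corr, hindu⟩)
    (p.mem l (by omega)) (G.dir_mem hdxd).2 hvlx hdx hvld

lemma shortcut_right (hG : G.IsMAG) (hx : x ∈ G.verts)
    (H : G.project (G.verts \ {x}) = G.induce (G.verts \ {x}))
    (hk : p.vert k = x) (hk0 : 0 < k)
    {d : V} (hdxd : G.dir x d) {r : ℕ} (hkr : k < r) (hrlen : r ≤ p.len)
    (hINV3 : ∀ i, k < i → i < r → p.collider i ∧ G.anc (p.vert i) d)
    (hdon : ∀ j, k < j → j ≤ r → p.vert j ≠ d) :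
    ∃ e, edirValid G d (p.vert r) e ∧ (bhd1 e = true ↔ ¬ G.anc d (p.vert r)) ∧
      (bhd2 e = true ↔ ¬ G.anc (p.vert r) d) := by
  have hdx : d ≠ x := fun h => hG.no_self_dir x (h ▸ hdxd)
  have hnotin : ∀ i, i ≤ (p.segment k r hkr hrlen).len →
      (p.segment k r hkr hrlen).vert i ≠ d := by
    intro i hi
    show p.vert (k + i) ≠ d
    have hilen : i ≤ r - k := hi
    by_cases hik : i = 0
    · rw [hik]
      show p.vert (k + 0) ≠ d
      rw [show k + 0 = k from rfl, hk]
      exact fun h => hdx h.symm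
    · exact hdon (k+i) (by omega) (by omega)
  have hvx : edirValid G d (p.vert k) .bwd := by
    show G.dir (p.vert k) d
    rw [hk]
    exact hdxd
  set corr := (p.segment k r hkr hrlen).consP .bwd hvx hnotin with hcorr
  have hclen : corr.len = (r - k) + 1 := rfl
  have hcvert : ∀ i, 0 < i → corr.vert i = p.vert (k + (i-1)) := by
    intro i hi
    show (if i = 0 then d else p.vert (k + (i-1))) = p.vert (k + (i-1))
    rw [if_neg (by omega)]
  have hcedir : ∀ i, 0 < i → corr.edir i = p.edir (k + (i-1)) := by
    intro i hi
    show (if i = 0 then .bwd else p.edir (k + (i-1))) = p.edir (k + (i-1))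
    rw [if_neg (by omega)]
  have hcedir0 : corr.edir 0 = .bwd := rfl
  have hindu : corr.isInducing {x} := by
    intro i h0 hi
    rw [hclen] at hi
    by_cases hik : i = 1
    · constructor
      · rintro ⟨hh2, -⟩
        rw [hik] at hh2
        rw [show (1:ℕ) - 1 = 0 from rfl, hcedir0] at hh2
        rcases hh2 with h|h <;> simp at h
      · intro _
        show corr.vert i ∈ ({x} : Set V)
        rw [hcvert i h0, hik]
        show p.vert (k + 0) ∈ ({x} : Set V)
        rw [show k + 0 = k from rfl, hk]
        rfl
    · obtain ⟨hc, hanc⟩ := hINV3 (k+(i-1)) (by omega) (by omega)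
      constructor
      · intro _
        left
        rw [hcvert i h0]
        exact hanc
      · intro hnc
        exfalso
        apply hnc
        constructor
        · have he : corr.edir (i-1) = p.edir (k + (i-1) - 1) := by
            rw [hcedir (i-1) (by omega)]
            congr 1
            omega
          rw [he]
          exact hc.1
        · rw [hcedir i h0]
          exact hc.2
  have hvrx : p.vert r ≠ x := by
    intro h
    have := p.inj r k (by omega) (by omega) (by rw [h, hk])
    omega
  have hvrd : d ≠ p.vert r := fun h => hdon r (by omega) (le_refl _) h.symm
  exact shortcut_edge hG hx H (Or.inl ⟨corr, hindu⟩)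
    (G.dir_mem hdxd).2 (p.mem r (by omega)) hdx hvrx hvrd

lemma condL_or_bad (hG : G.IsMAG) (hT : T = Z ∪ {y, z}) (hnb : ¬ p.blocked Z) (hyZ : y ∉ Z)
    (hk : p.vert k = x) (hkl : k < p.len)
    {d : V} (hdxd : G.dir x d) {l : ℕ} (hlk : l < k)
    (hINV2 : ∀ i, l < i → i < k → p.collider i ∧ G.anc (p.vert i) d)
    {e : EdgeDir} (he1 : bhd1 e = true ↔ ¬ G.anc (p.vert l) d) :
    (0 < l ∧ bhd2 (p.edir (l-1)) = true ∧ bhd1 (p.edir l) = true ∧ bhd1 e = false ∧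
      p.vert l ∈ Z) ∨ wcond G Z T (p.vert l) (pmark p l && bhd1 e) := by
  by_cases hbadL : 0 < l ∧ bhd2 (p.edir (l-1)) = true ∧ bhd1 (p.edir l) = true ∧
      bhd1 e = false ∧ p.vert l ∈ Z
  · exact Or.inl hbadL
  right
  constructor
  · intro htrue
    rw [Bool.and_eq_true] at htrue
    obtain ⟨hm, ho⟩ := htrue
    have hl0 : ¬ l = 0 := by
      intro h
      rw [h] at hm
      simp [pmark] at hm
    have hm' : bhd2 (p.edir (l-1)) = true := by rw [pmark, if_neg hl0] at hm; exact hm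
    by_cases hcl : bhd1 (p.edir l) = true
    · exact (mpath_cond hT hnb l (by omega) (by omega)).1 (by rw [hm', hcl]; rfl)
    · exfalso
      have hfwd : p.edir l = .fwd := bhd1_eq_false.mp (by simpa using hcl)
      have hdir : G.dir (p.vert l) (p.vert (l+1)) := by
        have hv := p.valid l (by omega)
        rw [hfwd] at hv
        exact hv
      have hnal : ¬ G.anc (p.vert l) d := he1.mp ho
      by_cases hlk1 : l + 1 = k
      · have hax : G.anc (p.vert l) x := by
          rw [← hk, ← hlk1]
          exact G.dir_anc hdir
        exact hnal (hax.trans (G.dir_anc hdxd))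
      · obtain ⟨-, ha⟩ := hINV2 (l+1) (by omega) (by omega)
        exact hnal ((G.dir_anc hdir).trans ha)
  · intro hfalse hZl
    by_cases hm : pmark p l = true
    · have hl0 : ¬ l = 0 := by
        intro h
        rw [h] at hm
        simp [pmark] at hm
      have hm' : bhd2 (p.edir (l-1)) = true := by rw [pmark, if_neg hl0] at hm; exact hm
      by_cases hcl : bhd1 (p.edir l) = true
      · have hef : bhd1 e = false := by
          rw [hm] at hfalse
          simpa using hfalse
        exact hbadL ⟨by omega, hm', hcl, hef, hZl⟩
      · have hcl' : bhd1 (p.edir l) = false := by simpa using hcl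
        exact (mpath_cond hT hnb l (by omega) (by omega)).2 (by rw [hcl']; simp) hZl
    · have hm0 : pmark p l = false := by simpa using hm
      by_cases hl0 : l = 0
      · subst hl0
        rw [p.first] at hZl
        exact hyZ hZl
      · have hm2 : bhd2 (p.edir (l-1)) = false := by rw [pmark, if_neg hl0] at hm0; exact hm0
        exact (mpath_cond hT hnb l (by omega) (by omega)).2 (by rw [hm2]; rfl) hZl

lemma condR_or_bad (hG : G.IsMAG) (hT : T = Z ∪ {y, z}) (hnb : ¬ p.blocked Z)
    (hk : p.vert k = x) (hk0 : 0 < k)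
    {d : V} (hdxd : G.dir x d) {r : ℕ} (hkr : k < r) (hrlen : r ≤ p.len)
    (hINV3 : ∀ i, k < i → i < r → p.collider i ∧ G.anc (p.vert i) d)
    {e : EdgeDir} (he2 : bhd2 e = true ↔ ¬ G.anc (p.vert r) d) :
    (r < p.len ∧ bhd1 (p.edir r) = true ∧ bhd2 (p.edir (r-1)) = true ∧ bhd2 e = false ∧
      p.vert r ∈ Z) ∨
    (r < p.len → wcond G Z T (p.vert r) (bhd2 e && bhd1 (p.edir r))) := by
  by_cases hbadR : r < p.len ∧ bhd1 (p.edir r) = true ∧ bhd2 (p.edir (r-1)) = true ∧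
      bhd2 e = false ∧ p.vert r ∈ Z
  · exact Or.inl hbadR
  right
  intro hrlt
  constructor
  · intro htrue
    rw [Bool.and_eq_true] at htrue
    obtain ⟨hm2, ho2⟩ := htrue
    by_cases hcr : bhd2 (p.edir (r-1)) = true
    · exact (mpath_cond hT hnb r (by omega) hrlt).1 (by rw [hcr, ho2]; rfl)
    · exfalso
      have hbwd : p.edir (r-1) = .bwd := bhd2_eq_false.mp (by simpa using hcr)
      have hdir : G.dir (p.vert r) (p.vert (r-1)) := by
        have hv := p.valid (r-1) (by omega)
        rw [hbwd] at hv
        rw [show r - 1 + 1 = r by omega] at hv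
        exact hv
      have hnar : ¬ G.anc (p.vert r) d := he2.mp hm2
      by_cases hrk1 : r - 1 = k
      · have hax : G.anc (p.vert r) x := by
          rw [← hk, ← hrk1]
          exact G.dir_anc hdir
        exact hnar (hax.trans (G.dir_anc hdxd))
      · obtain ⟨-, ha⟩ := hINV3 (r-1) (by omega) (by omega)
        exact hnar ((G.dir_anc hdir).trans ha)
  · intro hfalse hZr
    by_cases ho2 : bhd1 (p.edir r) = true
    · by_cases hm2 : bhd2 e = true
      · rw [hm2, ho2] at hfalse
        simp at hfalse
      · have hm2' : bhd2 e = false := by simpa using hm2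
        by_cases hcr : bhd2 (p.edir (r-1)) = true
        · exact hbadR ⟨hrlt, ho2, hcr, hm2', hZr⟩
        · have hcr' : bhd2 (p.edir (r-1)) = false := by simpa using hcr
          exact (mpath_cond hT hnb r (by omega) hrlt).2 (by rw [hcr']; rfl) hZr
    · have ho2' : bhd1 (p.edir r) = false := by simpa using ho2
      exact (mpath_cond hT hnb r (by omega) hrlt).2 (by rw [ho2']; simp) hZr


lemma main_cZ (hG : G.IsMAG) (hx : x ∈ G.verts)
    (H : G.project (G.verts \ {x}) = G.induce (G.verts \ {x}))
    (hT : T = Z ∪ {y, z}) (hnb : ¬ p.blocked Z) (hyZ : y ∉ Z)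
    (hk : p.vert k = x) (hk0 : 0 < k) (hkl : k < p.len) (hxc : p.collider k)
    {d b : V} (hdxd : G.dir x d) {vs : List V} (hch : DChain G Z d vs b) (hbZ : b ∈ Z) :
    ∀ (μ l r : ℕ), l + (p.len - r) ≤ μ → l < k → k < r → r ≤ p.len →
    (∀ i, l < i → i < k → p.collider i ∧ G.anc (p.vert i) d) →
    (∀ i, k < i → i < r → p.collider i ∧ G.anc (p.vert i) d) →
    GoodWalk G Z T x y z := by
  have hdx : d ≠ x := fun h => hG.no_self_dir x (h ▸ hdxd)
  have hvsx : ∀ c ∈ vs, c ≠ x :=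
    fun c hc h => hG.no_dir_cycle x d hdxd (h ▸ dchain_mem_anc _ _ _ hch c hc)
  have hZT : Z ⊆ T := by rw [hT]; exact Set.subset_union_left
  intro μ
  induction μ using Nat.strong_induction_on with
  | _ μ IH =>
  intro l r hμ hlk hkr hrlen hINV2 hINV3
  have hxcol2 : headAt2 (p.edir (k-1)) := hxc.1
  have hxcol1 : headAt1 (p.edir k) := hxc.2
  by_cases hdonL : ∃ j, l ≤ j ∧ j < k ∧ p.vert j = d
  · -- d lies on the left corridor
    obtain ⟨j, hjl, hjk, hjd⟩ := hdonL
    have hdonR : ∀ j', k < j' → j' ≤ r → p.vert j' ≠ d := by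
      intro j' h1 h2 h3
      have := p.inj j' j (by omega) (by omega) (by rw [h3, hjd])
      omega
    obtain ⟨h2e, hval2, h2e1, h2e2⟩ := shortcut_right hG hx H hk hk0 hdxd hkr hrlen hINV3 hdonR
    have hbeta_r : bhd1 h2e = true :=
      h2e1.mpr (beta_right hG hk hdxd hkr hrlen hxcol1 hINV3)
    rcases condR_or_bad hG hT hnb hk hk0 hdxd hkr hrlen hINV3 h2e2 with hbad | hcondR
    · obtain ⟨hrl, hor', hmr, hef, hZr⟩ := hbad
      have hancr : G.anc (p.vert r) d := by
        by_contra hno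
        rw [h2e2.mpr hno] at hef
        exact absurd hef (by simp)
      refine IH (μ - 1) (by omega) l (r+1) (by omega) hlk (by omega) (by omega) hINV2 ?_
      intro i hi1 hi2
      by_cases hir : i = r
      · subst hir
        exact ⟨⟨(bhd2_iff _).mp hmr, (bhd1_iff _).mp hor'⟩, hancr⟩
      · exact hINV3 i hi1 (by omega)
    · have hcondJ : wcond G Z T (p.vert j) (pmark p j && bhd1 h2e) := by
        rw [hbeta_r]
        constructor
        · intro htrue
          have hmj : pmark p j = true := by simpa using htrue
          have hj0 : ¬ j = 0 := by
            intro h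
            rw [h] at hmj
            simp [pmark] at hmj
          have hm' : bhd2 (p.edir (j-1)) = true := by rw [pmark, if_neg hj0] at hmj; exact hmj
          by_cases hcl : bhd1 (p.edir j) = true
          · exact (mpath_cond hT hnb j (by omega) (by omega)).1 (by rw [hm', hcl]; rfl)
          · exfalso
            have hfwd : p.edir j = .fwd := bhd1_eq_false.mp (by simpa using hcl)
            have hdir : G.dir (p.vert j) (p.vert (j+1)) := by
              have hv := p.valid j (by omega)
              rw [hfwd] at hv
              exact hv
            rw [hjd] at hdir
            by_cases hjk1 : j + 1 = k
            · have hddx : G.dir d x := by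
                rw [← hk, ← hjk1]
                exact hdir
              exact hG.no_dir_cycle x d hdxd (G.dir_anc hddx)
            · obtain ⟨-, ha⟩ := hINV2 (j+1) (by omega) (by omega)
              exact hG.no_dir_cycle d (p.vert (j+1)) hdir ha
        · intro hfalse
          have hmj : pmark p j = false := by simpa using hfalse
          by_cases hj0 : j = 0
          · subst hj0
            rw [p.first]
            exact hyZ
          · have hm2 : bhd2 (p.edir (j-1)) = false := by rw [pmark, if_neg hj0] at hmj; exact hmj
            exact (mpath_cond hT hnb j (by omega) (by omega)).2 (by rw [hm2]; rfl)
      refine ⟨pstep p j ++ (h2e, p.vert r) :: sufstep p r, ?_, ?_⟩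
      · refine ow_of_owT _ (mpath_prefix hT hnb hyZ j (by omega)) ⟨?_, hcondJ, ?_⟩
        · rw [hjd]
          exact hval2
        · exact mpath_suffix hT hnb (p.len - r) r rfl (by omega) (bhd2 h2e) hcondR
      · intro q hq
        rcases List.mem_append.mp hq with h1 | h1
        · exact pstep_ne_x hk hkl (by omega) q h1
        · rcases List.mem_cons.mp h1 with rfl | h2
          · intro h
            have := p.inj r k (by omega) (by omega) (by rw [show p.vert r = x from h, hk])
            omega
          · exact sufstep_ne_x hk (by omega) q h2
  · push_neg at hdonL
    obtain ⟨h1e, hval1, h1e1, h1e2⟩ := shortcut_left hG hx H hk hkl hdxd hlk hINV2 hdonL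
    have hbeta_l : bhd2 h1e = true :=
      h1e2.mpr (beta_left hG hk hdxd hlk hkl hxcol2 hINV2)
    rcases condL_or_bad hG hT hnb hyZ hk hkl hdxd hlk hINV2 h1e1 with hbad | hcondL
    · obtain ⟨hl0, hm', hol, hef, hZl⟩ := hbad
      have hancl : G.anc (p.vert l) d := by
        by_contra hno
        rw [h1e1.mpr hno] at hef
        exact absurd hef (by simp)
      refine IH (μ - 1) (by omega) (l-1) r (by omega) (by omega) hkr hrlen ?_ hINV3
      intro i hi1 hi2
      by_cases hil : i = l
      · subst hil
        exact ⟨⟨(bhd2_iff _).mp hm', (bhd1_iff _).mp hol⟩, hancl⟩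
      · exact hINV2 i (by omega) hi2
    · by_cases hdonR : ∃ j, k < j ∧ j ≤ r ∧ p.vert j = d
      · -- d lies on the right corridor
        obtain ⟨j, hjk, hjr, hjd⟩ := hdonR
        have hcondJ : j < p.len → wcond G Z T (p.vert j) (bhd2 h1e && bhd1 (p.edir j)) := by
          intro hjlen
          rw [hbeta_l]
          constructor
          · intro htrue
            have ho : bhd1 (p.edir j) = true := by simpa using htrue
            by_cases hmj : bhd2 (p.edir (j-1)) = true
            · exact (mpath_cond hT hnb j (by omega) hjlen).1 (by rw [hmj, ho]; rfl)
            · exfalso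
              have hbwd : p.edir (j-1) = .bwd := bhd2_eq_false.mp (by simpa using hmj)
              have hdir : G.dir (p.vert j) (p.vert (j-1)) := by
                have hv := p.valid (j-1) (by omega)
                rw [hbwd] at hv
                rw [show j - 1 + 1 = j by omega] at hv
                exact hv
              rw [hjd] at hdir
              by_cases hjk1 : j - 1 = k
              · have hddx : G.dir d x := by
                  rw [← hk, ← hjk1]
                  exact hdir
                exact hG.no_dir_cycle x d hdxd (G.dir_anc hddx)
              · obtain ⟨-, ha⟩ := hINV3 (j-1) (by omega) (by omega)
                exact hG.no_dir_cycle d (p.vert (j-1)) hdir ha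
          · intro hfalse
            have ho : bhd1 (p.edir j) = false := by simpa using hfalse
            exact (mpath_cond hT hnb j (by omega) hjlen).2 (by rw [ho]; simp)
        refine ⟨pstep p l ++ (h1e, d) :: sufstep p j, ?_, ?_⟩
        · refine ow_of_owT _ (mpath_prefix hT hnb hyZ l (by omega)) ⟨hval1, hcondL, ?_⟩
          have := mpath_suffix hT hnb (p.len - j) j rfl (by omega) (bhd2 h1e) hcondJ
          rwa [hjd] at this
        · intro q hq
          rcases List.mem_append.mp hq with h1 | h1
          · exact pstep_ne_x hk hkl hlk q h1
          · rcases List.mem_cons.mp h1 with rfl | h2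
            · exact hdx
            · exact sufstep_ne_x hk (by omega) q h2
      · -- d on neither corridor
        push_neg at hdonR
        obtain ⟨h2e, hval2, h2e1, h2e2⟩ :=
          shortcut_right hG hx H hk hk0 hdxd hkr hrlen hINV3 hdonR
        have hbeta_r : bhd1 h2e = true :=
          h2e1.mpr (beta_right hG hk hdxd hkr hrlen hxcol1 hINV3)
        rcases condR_or_bad hG hT hnb hk hk0 hdxd hkr hrlen hINV3 h2e2 with hbad | hcondR
        · obtain ⟨hrl, hor', hmr, hef, hZr⟩ := hbad
          have hancr : G.anc (p.vert r) d := by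
            by_contra hno
            rw [h2e2.mpr hno] at hef
            exact absurd hef (by simp)
          refine IH (μ - 1) (by omega) l (r+1) (by omega) hlk (by omega) (by omega) hINV2 ?_
          intro i hi1 hi2
          by_cases hir : i = r
          · subst hir
            exact ⟨⟨(bhd2_iff _).mp hmr, (bhd1_iff _).mp hor'⟩, hancr⟩
          · exact hINV3 i hi1 (by omega)
        · have hvrx : p.vert r ≠ x := by
            intro h
            have := p.inj r k (by omega) (by omega) (by rw [h, hk])
            omega
          have hsufr : ow G Z T z (p.vert r) (bhd2 h2e) (sufstep p r) :=
            mpath_suffix hT hnb (p.len - r) r rfl (by omega) (bhd2 h2e) hcondR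
          cases vs with
          | nil =>
              obtain rfl : d = b := hch
              refine ⟨pstep p l ++ (h1e, d) :: (h2e, p.vert r) :: sufstep p r, ?_, ?_⟩
              · refine ow_of_owT _ (mpath_prefix hT hnb hyZ l (by omega)) ⟨hval1, hcondL, ?_⟩
                refine ⟨hval2, ?_, hsufr⟩
                rw [hbeta_l, hbeta_r]
                exact ⟨fun _ => ⟨d, hZT hbZ, G.anc_refl d⟩, fun hf => by simp at hf⟩
              · intro q hq
                rcases List.mem_append.mp hq with h1 | h1
                · exact pstep_ne_x hk hkl hlk q h1
                · rcases List.mem_cons.mp h1 with rfl | h2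
                  · exact hdx
                  · rcases List.mem_cons.mp h2 with rfl | h3
                    · exact hvrx
                    · exact sufstep_ne_x hk (by omega) q h3
          | cons c vs' =>
              obtain ⟨hdc, hdZ, hch'⟩ := hch
              have hrest_d2 : ow G Z T z d false ((h2e, p.vert r) :: sufstep p r) :=
                ⟨hval2, ⟨fun h => by simp at h, fun _ => hdZ⟩, hsufr⟩
              obtain ⟨mid, hmid, hsubmid⟩ := tour hZT vs' c b hch' hbZ .bwd d
                ((h2e, p.vert r) :: sufstep p r) rfl hdc hrest_d2
              refine ⟨pstep p l ++ (h1e, d) :: (.fwd, c) ::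
                (mid ++ (.bwd, d) :: (h2e, p.vert r) :: sufstep p r), ?_, ?_⟩
              · refine ow_of_owT _ (mpath_prefix hT hnb hyZ l (by omega)) ⟨hval1, hcondL, ?_⟩
                exact ⟨hdc, ⟨fun h => by simp [bhd1] at h, fun _ => hdZ⟩, hmid⟩
              · intro q hq
                rcases List.mem_append.mp hq with h1 | h1
                · exact pstep_ne_x hk hkl hlk q h1
                · rcases List.mem_cons.mp h1 with rfl | h2
                  · exact hdx
                  · rcases List.mem_cons.mp h2 with rfl | h3
                    · exact hvsx c (by simp)
                    · rcases List.mem_append.mp h3 with h4 | h4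
                      · have := hsubmid q h4
                        rcases List.mem_cons.mp this with h5 | h5
                        · rw [h5]
                          exact hvsx c (by simp)
                        · exact hvsx _ (by simp [h5])
                      · rcases List.mem_cons.mp h4 with rfl | h5
                        · exact hdx
                        · rcases List.mem_cons.mp h5 with rfl | h6
                          · exact hvrx
                          · exact sufstep_ne_x hk (by omega) q h6


lemma main_c (hG : G.IsMAG) (hx : x ∈ G.verts)
    (H : G.project (G.verts \ {x}) = G.induce (G.verts \ {x}))
    (hT : T = Z ∪ {y, z}) (hnb : ¬ p.blocked Z) (hyZ : y ∉ Z) (hxZ : x ∉ Z)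
    (hxy : x ≠ y) (hxz : x ≠ z)
    (hk : p.vert k = x) (hk0 : 0 < k) (hkl : k < p.len) (hxc : p.collider k) :
    GoodWalk G Z T x y z := by
  obtain ⟨w0, hw0T, hancx⟩ := (mpath_cond hT hnb k hk0 hkl).1 (by
    rw [(bhd2_iff _).mpr hxc.1, (bhd1_iff _).mpr hxc.2]; rfl)
  rw [hk] at hancx
  have hxw0 : x ≠ w0 := by
    intro h
    rw [hT] at hw0T
    rcases hw0T with hh | hh
    · exact hxZ (h ▸ hh)
    · rcases hh with hh | hh
      · exact hxy (h.trans hh)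
      · exact hxz (h.trans hh)
  obtain ⟨d, hdxd, hdw0⟩ : ∃ d, G.dir x d ∧ G.anc d w0 := by
    rcases hancx.cases_head with h | ⟨d, h1, h2⟩
    · exact absurd h hxw0
    · exact ⟨d, h1, h2⟩
  have hZT : Z ⊆ T := by rw [hT]; exact Set.subset_union_left
  obtain ⟨b, hbT, vs, hch⟩ := esc hG hZT hw0T d hdw0
  rw [hT] at hbT
  rcases hbT with hbZ | hbyz
  · exact main_cZ hG hx H hT hnb hyZ hk hk0 hkl hxc hdxd hch hbZ p.len (k-1) (k+1)
      (by omega) (by omega) (by omega) (by omega)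
      (fun i h1 h2 => absurd h1 (by omega)) (fun i h1 h2 => absurd h1 (by omega))
  · rcases hbyz with rfl | rfl
    · exact main_cy hG hx H hT hnb hyZ hk hk0 hkl hdxd hch p.len (k+1)
        (by omega) (by omega) (by omega) (fun i h1 h2 => absurd h1 (by omega))
    · exact main_cz hG hx H hT hnb hyZ hk hk0 hkl hdxd hch k (k-1)
        (by omega) (by omega) (fun i h1 h2 => absurd h1 (by omega))

lemma not_mSep_induce_of_not_mSep (hG : G.IsMAG) (hx : x ∈ G.verts)
    (H : G.project (G.verts \ {x}) = G.induce (G.verts \ {x}))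
    {y z : V} {Z : Set V} (hyz : y ≠ z) (hxy : x ≠ y) (hxz : x ≠ z)
    (hZ : Z ⊆ G.verts \ {x, y, z})
    (hns : ¬ mSep G y z Z) : ¬ mSep (G.induce (G.verts \ {x})) y z Z := by
  obtain ⟨p, hnb⟩ := not_mSep_iff.mp hns
  have hxZ : x ∉ Z := fun h => (hZ h).2 (by simp)
  have hyZ : y ∉ Z := fun h => (hZ h).2 (by simp)
  have hzZ : z ∉ Z := fun h => (hZ h).2 (by simp)
  have hGW : GoodWalk G Z (Z ∪ {y, z}) x y z := by
    by_cases hxon : ∃ k, k ≤ p.len ∧ p.vert k = x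
    · obtain ⟨k, hklen, hk⟩ := hxon
      have hk0 : 0 < k := by
        rcases Nat.eq_zero_or_pos k with h | h
        · exfalso
          rw [h, p.first] at hk
          exact hxy hk.symm
        · exact h
      have hkl : k < p.len := by
        rcases Nat.lt_or_ge k p.len with h | h
        · exact h
        · exfalso
          have hke : k = p.len := by omega
          rw [hke, p.last] at hk
          exact hxz hk.symm
      by_cases hxc : p.collider k
      · exact main_c hG hx H rfl hnb hyZ hxZ hxy hxz hk hk0 hkl hxc
      · exact main_nc hG hx H rfl hnb hyZ hk hk0 hkl hxc p.len (k-1) (k+1)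
          (by omega) (by omega) (by omega) (by omega)
          (fun i h1 h2 h3 => absurd h3 (by omega))
    · push_neg at hxon
      refine ⟨sufstep p 0, ?_, ?_⟩
      · have := mpath_to_ow (T := Z ∪ {y, z}) rfl hnb hyZ
        exact this
      · intro q hq
        simp only [sufstep, List.mem_map, List.mem_range] at hq
        obtain ⟨j, hj, rfl⟩ := hq
        exact hxon (0+j+1) (by omega)
  obtain ⟨s, hws, hsx⟩ := hGW
  have hTx : ∀ t ∈ (Z ∪ {y, z} : Set V), t ≠ x := by
    intro t ht
    rcases ht with ht | ht
    · exact fun h => hxZ (h ▸ ht)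
    · rcases ht with rfl | ht
      · exact hxy.symm
      · rw [Set.mem_singleton_iff] at ht
        subst ht
        exact hxz.symm
  have hws' := ow_to_induce hG hx H hTx s y false hxy.symm hsx hws
  have hns2 : ∀ (a : V) (e : EdgeDir), ¬ edirValid (G.induce (G.verts \ {x})) a a e :=
    fun a e h => hG.no_self_edge a e (edirValid_induce_le h)
  have hzT : z ∈ (Z ∪ {y, z} : Set V) := Or.inr (by simp)
  obtain ⟨s', hw', hnd', -⟩ := ow_nodup hzT hns2 s.length s y false (le_refl _) hws'
  obtain ⟨q, hq⟩ := ow_to_mpath rfl hyz s' hw' hnd'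
  exact not_mSep_iff.mpr ⟨q, hq⟩

lemma removable_of_project_eq (hG : G.IsMAG) (hx : x ∈ G.verts)
    (H : G.project (G.verts \ {x}) = G.induce (G.verts \ {x})) :
    G.Removable x := by
  intro y z hy hz hyx hzx hyz Z hZ
  constructor
  · exact fun h => mSep_induce_of_mSep h
  · intro hsep
    by_contra hns
    exact not_mSep_induce_of_not_mSep hG hx H hyz hyx.symm hzx.symm hZ hns hsep

end MainSurgery

end Aux

/-- For a MAG `G` over `W` and `X ∈ W`, the latent projection
`G_{W ∖ {X}}` equals the induced subgraph `G[W ∖ {X}]` iff `X` is removable in `G`. -/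
theorem stmt_0 {V : Type*} [Fintype V] (G : MixedGraph V) (hG : G.IsMAG)
    (x : V) (hx : x ∈ G.verts) :
    G.project (G.verts \ {x}) = G.induce (G.verts \ {x}) ↔ G.Removable x :=
  ⟨fun H => removable_of_project_eq hG hx H,
   fun hrem => project_eq_induce_of_removable hG hx hrem⟩
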